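/- arXiv:1106.1629 — 13 statements merged into one kernel-verified Lean document; each statement's English description precedes it below -/
import Mathlib

section
/- There is no uniquely universal open set in 2^ω × 2^ω; that is, the pair (2^ω, 2^ω) does not satisfy UU. -/
/-- The pair (X, Y) satisfies UU: there is an open set `U ⊆ X × Y` such that
every open `W ⊆ Y` is the cross section `{y | (x, y) ∈ U}` for exactly one `x`. -/
def UU (X Y : Type*) [TopologicalSpace X] [TopologicalSpace Y] : Prop :=
  ∃ U : Set (X × Y), IsOpen U ∧
    ∀ W : Set Y, IsOpen W → ∃! x : X, {y | (x, y) ∈ U} = W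

/-- Any open set in `ℕ → Bool` containing `x` contains a point different from `x`. -/
lemma exists_ne_mem_of_isOpen {V : Set (ℕ → Bool)} (hV : IsOpen V) {x : ℕ → Bool}
    (hx : x ∈ V) : ∃ x' ∈ V, x' ≠ x := by
  obtain ⟨I, u, hu, hsub⟩ := isOpen_pi_iff.mp hV x hx
  obtain ⟨n, hn⟩ := Finset.exists_notMem I
  refine ⟨Function.update x n (!x n), hsub ?_, ?_⟩
  · intro a ha
    rw [Function.update_of_ne (by rintro rfl; exact hn ha)]
    exact (hu a ha).2
  · intro h
    have := congrFun h n
    simp [Function.update_self] at this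

theorem stmt_0 : ¬ UU (ℕ → Bool) (ℕ → Bool) := by
  rintro ⟨U, hU, hUU⟩
  obtain ⟨x, hx, huniq⟩ := hUU Set.univ isOpen_univ
  -- tube lemma: {x} × univ ⊆ U, univ compact
  have hsub : Set.singleton x ×ˢ (Set.univ : Set (ℕ → Bool)) ⊆ U := by
    rintro ⟨a, b⟩ ⟨ha, -⟩
    obtain rfl : a = x := ha
    show b ∈ {y | (a, y) ∈ U}
    rw [hx]; trivial
  obtain ⟨V, W, hVopen, -, hxV, hW, hVW⟩ :=
    generalized_tube_lemma isCompact_singleton isCompact_univ hU hsub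
  have hxV' : x ∈ V := hxV rfl
  obtain ⟨x', hx'V, hx'ne⟩ := exists_ne_mem_of_isOpen hVopen hxV'
  have : {y | (x', y) ∈ U} = Set.univ := by
    ext y
    simp only [Set.mem_setOf_eq, Set.mem_univ, iff_true]
    exact hVW ⟨hx'V, hW (Set.mem_univ y)⟩
  exact hx'ne (huniq x' this)
end

section
/- If X and Y are topological spaces, Y is compact, and the pair (X, Y) satisfies UU, then X has an isolated point. -/
/-! If `U` is uniquely universal, the only `x` whose cross section is all of `Y` is the index
`x₀` of `Y`. For compact `Y` the tube lemma makes the set of such `x` open, so `{x₀}` is open. -/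

open Set

theorem isOpen_setOf_forall_prodMk_mem {X Y : Type*} [TopologicalSpace X] [TopologicalSpace Y]
    [CompactSpace Y] {U : Set (X × Y)} (hU : IsOpen U) : IsOpen {x | ∀ y, (x, y) ∈ U} := by
  refine isOpen_iff_mem_nhds.2 fun x hx => ?_
  exact (isCompact_univ.eventually_forall_of_forall_eventually (P := fun x y => (x, y) ∈ U)
    fun y _ => hU.mem_nhds (hx y)).mono fun _ h y => h y (mem_univ y)

theorem stmt_1 (X Y : Type*) [TopologicalSpace X] [TopologicalSpace Y]
    [CompactSpace Y] (h : UU X Y) : ∃ x : X, IsOpen ({x} : Set X) := by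
  obtain ⟨U, hU, hsection⟩ := h
  obtain ⟨x₀, hx₀, huniq⟩ := hsection univ isOpen_univ
  have hfull : {x | ∀ y, (x, y) ∈ U} = {x₀} := by
    ext x
    refine ⟨fun hx => huniq x (eq_univ_of_forall hx), ?_⟩
    rintro rfl
    exact eq_univ_iff_forall.1 hx₀
  exact ⟨x₀, hfull ▸ isOpen_setOf_forall_prodMk_mem hU⟩
end

section
/- Let X be the topological sum of Cantor space and a single isolated point (i.e., the disjoint union (ℕ → Bool) ⊕ Unit with the sum topology). Then the pair (X, 2^ω) satisfies UU. -/
open Set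

theorem IsLocallyConstant.fiberwise {X ι Y : Type*} [TopologicalSpace X] {s : X → ι}
    (hs : IsLocallyConstant s) {f : ι → X → Y} (hf : ∀ i, IsLocallyConstant (f i)) :
    IsLocallyConstant fun x => f (s x) x := by
  rw [IsLocallyConstant.iff_eventually_eq]
  intro x
  filter_upwards [hs.eventually_eq x, (hf (s x)).eventually_eq x] with y hsy hfy
  rw [hsy, hfy]

theorem uu_sum_unit {X Y : Type*} [TopologicalSpace X] [TopologicalSpace Y] {V : Set (X × Y)}
    (hV : IsOpen V) (hne : ∀ x, {y | (x, y) ∈ V} ≠ univ)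
    (huniq : ∀ W, IsOpen W → W ≠ univ → ∃! x, {y | (x, y) ∈ V} = W) :
    UU (X ⊕ Unit) Y := by
  let e : (X ⊕ Unit) × Y ≃ₜ (X × Y) ⊕ (Unit × Y) := Homeomorph.sumProdDistrib
  have he : ∀ p, e p = Equiv.sumProdDistrib _ _ _ p := fun _ => rfl
  refine ⟨e ⁻¹' (Sum.inl '' V ∪ range Sum.inr),
    (isOpenMap_inl V hV |>.union isOpen_range_inr).preimage e.continuous, fun W hW => ?_⟩
  have sec_inl (x : X) : {y | (Sum.inl x, y) ∈ e ⁻¹' (Sum.inl '' V ∪ range Sum.inr)} =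
      {y | (x, y) ∈ V} := by
    ext y; simp [he]
  have sec_inr (u : Unit) : {y | (Sum.inr u, y) ∈ e ⁻¹' (Sum.inl '' V ∪ range Sum.inr)} =
      univ := by
    ext y; simp [he]
  by_cases hWu : W = univ
  · subst hWu
    refine ⟨Sum.inr (), sec_inr (), ?_⟩
    rintro (x | ⟨⟩) hx
    · exact absurd ((sec_inl x).symm.trans hx) (hne x)
    · rfl
  · obtain ⟨x, hx, hxuniq⟩ := huniq W hW hWu
    refine ⟨Sum.inl x, (sec_inl x).trans hx, ?_⟩
    rintro (x' | ⟨⟩) hx'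
    · rw [hxuniq x' ((sec_inl x').symm.trans hx')]
    · exact absurd ((sec_inr ()).symm.trans hx').symm hWu

namespace CantorCode

def admitsHead (x : ℕ → Bool) (b : Bool) : Prop := x 0 = true → b = x 1

-- If `a = x 0` is `true`, the subtree below the only child is coded from position 2 on; if it is
-- `false`, the codes of the subtrees below the children `false` and `true` are interleaved.
def subcodeIndex (a b : Bool) (i : ℕ) : ℕ := if a then i + 2 else 2 * i + 1 + b.toNat

def subcode (x : ℕ → Bool) (b : Bool) : ℕ → Bool := fun i => x (subcodeIndex (x 0) b i)

def AdmitsPrefix : ℕ → (ℕ → Bool) → (ℕ → Bool) → Prop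
  | 0, _, _ => True
  | n + 1, x, y => admitsHead x (y 0) ∧ AdmitsPrefix n (subcode x (y 0)) fun i => y (i + 1)

def decode (x : ℕ → Bool) : Set (ℕ → Bool) := {y | ∀ n, AdmitsPrefix n x y}

theorem mem_decode_iff {x y : ℕ → Bool} :
    y ∈ decode x ↔ admitsHead x (y 0) ∧ (fun i => y (i + 1)) ∈ decode (subcode x (y 0)) :=
  ⟨fun h => ⟨(h 1).1, fun n => (h (n + 1)).2⟩,
    fun ⟨h0, h⟩ n => n.casesOn trivial fun n => ⟨h0, h n⟩⟩

theorem isLocallyConstant_admitsPrefix (n : ℕ) :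
    IsLocallyConstant fun p : (ℕ → Bool) × (ℕ → Bool) => AdmitsPrefix n p.1 p.2 := by
  induction n with
  | zero => exact IsLocallyConstant.const True
  | succ n ih =>
    have hhead : IsLocallyConstant fun p : (ℕ → Bool) × (ℕ → Bool) => admitsHead p.1 (p.2 0) :=
      (IsLocallyConstant.of_discrete fun q : Bool × Bool × Bool => q.1 = true → q.2.2 = q.2.1)
        |>.comp_continuous (f := fun p : (ℕ → Bool) × (ℕ → Bool) => (p.1 0, p.1 1, p.2 0))
          (by fun_prop)
    have htail : IsLocallyConstant fun p : (ℕ → Bool) × (ℕ → Bool) =>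
        AdmitsPrefix n (subcode p.1 (p.2 0)) fun i => p.2 (i + 1) :=
      -- for fixed values of `x 0` and `y 0`, `subcode x (y 0)` is a fixed reindexing of `x`
      ((IsLocallyConstant.of_discrete id).comp_continuous
        (by fun_prop : Continuous fun p : (ℕ → Bool) × (ℕ → Bool) => (p.1 0, p.2 0))).fiberwise
        (f := fun q p =>
          AdmitsPrefix n (fun i => p.1 (subcodeIndex q.1 q.2 i)) fun i => p.2 (i + 1))
        fun q => ih.comp_continuous (f := fun p : (ℕ → Bool) × (ℕ → Bool) =>
          (fun i => p.1 (subcodeIndex q.1 q.2 i), fun i => p.2 (i + 1))) (by fun_prop)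
    exact hhead.comp₂ htail And

theorem isClosed_setOf_mem_decode : IsClosed {p : (ℕ → Bool) × (ℕ → Bool) | p.2 ∈ decode p.1} := by
  have h : {p : (ℕ → Bool) × (ℕ → Bool) | p.2 ∈ decode p.1} =
      ⋂ n, {p | AdmitsPrefix n p.1 p.2} := by
    ext p; simp [decode]
  rw [h]
  exact isClosed_iInter fun n => by
    simpa using (isLocallyConstant_admitsPrefix n).isClosed_fiber True

def branch (x : ℕ → Bool) : ℕ → Bool
  | 0 => x 0 && x 1
  | n + 1 => branch (subcode x (x 0 && x 1)) n

theorem branch_mem_decode (x : ℕ → Bool) : branch x ∈ decode x := by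
  intro n
  induction n generalizing x with
  | zero => trivial
  | succ n ih => exact ⟨fun h => by simp [branch, h], ih _⟩

theorem decode_nonempty (x : ℕ → Bool) : (decode x).Nonempty := ⟨branch x, branch_mem_decode x⟩

def tailsOf (b : Bool) (C : Set (ℕ → Bool)) : Set (ℕ → Bool) := {z | Stream'.cons b z ∈ C}

theorem mem_tailsOf_decode {b : Bool} {x z : ℕ → Bool} :
    z ∈ tailsOf b (decode x) ↔ admitsHead x b ∧ z ∈ decode (subcode x b) :=
  mem_decode_iff

theorem tailsOf_decode_nonempty_iff {b : Bool} {x : ℕ → Bool} :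
    (tailsOf b (decode x)).Nonempty ↔ admitsHead x b :=
  ⟨fun ⟨_, hz⟩ => (mem_tailsOf_decode.mp hz).1,
    fun h => ⟨branch _, mem_tailsOf_decode.mpr ⟨h, branch_mem_decode _⟩⟩⟩

theorem head_eq_of_admitsHead_eq {x x' : ℕ → Bool} (h : admitsHead x = admitsHead x') :
    x 0 = x' 0 ∧ (x 0 = true → x 1 = x' 1) := by
  have h₁ := congrFun h (!x 1)
  have h₂ := congrFun h (!x' 1)
  simp only [admitsHead] at h₁ h₂ ⊢
  revert h₁ h₂
  generalize x 0 = a, x 1 = b, x' 0 = a', x' 1 = b'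
  decide +revert

theorem eq_of_bisim {R : (ℕ → Bool) → (ℕ → Bool) → Prop}
    (hhead : ∀ x x', R x x' → admitsHead x = admitsHead x')
    (hsub : ∀ x x' b, R x x' → admitsHead x b → R (subcode x b) (subcode x' b))
    {x x' : ℕ → Bool} (h : R x x') : x = x' := by
  suffices ∀ k x x', R x x' → x k = x' k from funext fun k => this k x x' h
  intro k
  induction k using Nat.strong_induction_on with
  | _ k ih =>
  intro x x' h
  obtain ⟨h0, h1⟩ := head_eq_of_admitsHead_eq (hhead x x' h)
  have hsub' (b : Bool) (hb : admitsHead x b) (i : ℕ) (hi : i < k) :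
      subcode x b i = subcode x' b i :=
    ih i hi _ _ (hsub x x' b h hb)
  cases hx0 : x 0
  · rcases k with _ | j
    · exact h0
    · have hidx : subcodeIndex false (decide (j % 2 = 1)) (j / 2) = j + 1 := by
        rcases Nat.mod_two_eq_zero_or_one j with hj | hj <;> simp [subcodeIndex, hj] <;> omega
      have := hsub' (decide (j % 2 = 1)) (by simp [admitsHead, hx0]) (j / 2) (by omega)
      rwa [subcode, subcode, ← h0, hx0, hidx] at this
  · rcases k with _ | _ | j
    · exact h0
    · exact h1 hx0
    · have := hsub' (x 1) (fun _ => rfl) j (by omega)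
      rwa [subcode, subcode, ← h0, hx0] at this

theorem decode_injective : Function.Injective decode := by
  intro x x' h
  refine eq_of_bisim (R := fun x x' => decode x = decode x') ?_ ?_ h
  · intro x x' h
    ext b
    rw [← tailsOf_decode_nonempty_iff, h, tailsOf_decode_nonempty_iff]
  · intro x x' b h hb
    have hb' : admitsHead x' b := by
      rwa [← tailsOf_decode_nonempty_iff, ← h, tailsOf_decode_nonempty_iff]
    ext z
    have := congrArg (z ∈ tailsOf b ·) h
    simpa only [mem_tailsOf_decode, hb, hb', true_and, eq_iff_iff] using this

theorem exists_mem_tailsOf_cylinder_iff {C : Set (ℕ → Bool)} {y : ℕ → Bool} {n : ℕ} :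
    (∃ z ∈ tailsOf (y 0) C, z ∈ PiNat.cylinder (fun i => y (i + 1)) n) ↔
      ∃ w ∈ C, w ∈ PiNat.cylinder y (n + 1) := by
  simp only [tailsOf, PiNat.mem_cylinder_iff]
  constructor
  · rintro ⟨z, hz, hzy⟩
    refine ⟨_, hz, fun i hi => ?_⟩
    rcases i with _ | i
    · rfl
    · exact hzy i (by omega)
  · rintro ⟨w, hw, hwy⟩
    have hcons : Stream'.cons (y 0) (fun i => w (i + 1)) = w := by
      rw [← hwy 0 (by omega)]
      exact Stream'.eta w
    exact ⟨_, hcons ▸ hw, fun i hi => hwy (i + 1) (by omega)⟩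

theorem tailsOf_nonempty_of_nonempty {C : Set (ℕ → Bool)} (hC : C.Nonempty) :
    ∃ b, (tailsOf b C).Nonempty := by
  obtain ⟨w, hw⟩ := hC
  have hcons : Stream'.cons (w 0) (fun i => w (i + 1)) = w := Stream'.eta w
  exact ⟨w 0, fun i => w (i + 1), hcons ▸ hw⟩

section Code

open Classical

noncomputable def code (C : Set (ℕ → Bool)) (k : ℕ) : Bool :=
  if (tailsOf false C).Nonempty ∧ (tailsOf true C).Nonempty then
    match k with
    | 0 => false
    | k + 1 => code (tailsOf (decide (k % 2 = 1)) C) (k / 2)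
  else
    match k with
    | 0 => true
    | 1 => decide (tailsOf true C).Nonempty
    | k + 2 => code (tailsOf (decide (tailsOf true C).Nonempty) C) k
termination_by k

theorem admitsHead_code_iff {C : Set (ℕ → Bool)} (hC : C.Nonempty) {b : Bool} :
    admitsHead (code C) b ↔ (tailsOf b C).Nonempty := by
  obtain ⟨b₀, hb₀⟩ := tailsOf_nonempty_of_nonempty hC
  by_cases hboth : (tailsOf false C).Nonempty ∧ (tailsOf true C).Nonempty
  · rw [admitsHead, code, if_pos hboth]
    cases b <;> simp [hboth]
  · rw [admitsHead, code, if_neg hboth, code, if_neg hboth]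
    cases b <;> cases b₀ <;> by_cases ht : (tailsOf true C).Nonempty <;> simp_all

theorem subcode_code {C : Set (ℕ → Bool)} {b : Bool} (hb : admitsHead (code C) b) :
    subcode (code C) b = code (tailsOf b C) := by
  funext i
  by_cases hboth : (tailsOf false C).Nonempty ∧ (tailsOf true C).Nonempty
  · have h0 : code C 0 = false := by rw [code, if_pos hboth]
    have hsucc (k : ℕ) : code C (k + 1) = code (tailsOf (decide (k % 2 = 1)) C) (k / 2) := by
      rw [code, if_pos hboth]
    cases b <;> simp [subcode, subcodeIndex, h0, hsucc, Nat.mul_add_div]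
  · have h0 : code C 0 = true := by rw [code, if_neg hboth]
    have h1 : code C 1 = decide (tailsOf true C).Nonempty := by rw [code, if_neg hboth]
    have hadd (k : ℕ) : code C (k + 2) = code (tailsOf (decide (tailsOf true C).Nonempty) C) k := by
      rw [code, if_neg hboth]
    rw [hb h0, subcode, h0, subcodeIndex, if_pos rfl, hadd, h1]

theorem admitsPrefix_code_iff {C : Set (ℕ → Bool)} (hC : C.Nonempty) (n : ℕ) (y : ℕ → Bool) :
    AdmitsPrefix n (code C) y ↔ ∃ z ∈ C, z ∈ PiNat.cylinder y n := by
  induction n generalizing C y with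
  | zero => simpa [AdmitsPrefix, PiNat.cylinder_zero, Set.Nonempty] using hC
  | succ n ih =>
    rw [← exists_mem_tailsOf_cylinder_iff, AdmitsPrefix, admitsHead_code_iff hC]
    constructor
    · rintro ⟨hne, h⟩
      rwa [subcode_code ((admitsHead_code_iff hC).mpr hne), ih hne] at h
    · rintro ⟨z, hz, hzy⟩
      refine ⟨⟨z, hz⟩, ?_⟩
      rw [subcode_code ((admitsHead_code_iff hC).mpr ⟨z, hz⟩), ih ⟨z, hz⟩]
      exact ⟨z, hz, hzy⟩

theorem decode_code {C : Set (ℕ → Bool)} (hC : IsClosed C) (hne : C.Nonempty) :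
    decode (code C) = C := by
  ext y
  simp only [decode, mem_ofPred_eq, admitsPrefix_code_iff hne]
  refine ⟨fun h => ?_, fun hy n => ⟨y, hy, PiNat.self_mem_cylinder y n⟩⟩
  by_contra hy
  obtain ⟨n, hn⟩ := PiNat.exists_disjoint_cylinder hC hy
  obtain ⟨z, hz, hzy⟩ := h n
  exact hn.le_bot ⟨hz, hzy⟩

end Code

theorem existsUnique_decode_eq {C : Set (ℕ → Bool)} (hC : IsClosed C) (hne : C.Nonempty) :
    ∃! x, decode x = C :=
  ⟨code C, decode_code hC hne, fun _ hx => decode_injective (hx.trans (decode_code hC hne).symm)⟩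

end CantorCode

theorem stmt_2 : UU ((ℕ → Bool) ⊕ Unit) (ℕ → Bool) := by
  refine uu_sum_unit (V := {p | p.2 ∉ CantorCode.decode p.1})
    CantorCode.isClosed_setOf_mem_decode.isOpen_compl
    (fun x => by simpa [← compl_ofPred] using (CantorCode.decode_nonempty x).ne_empty)
    fun W hW hWu => ?_
  refine (existsUnique_congr fun x => ?_).mp
    (CantorCode.existsUnique_decode_eq hW.isClosed_compl (nonempty_compl.mpr hWu))
  rw [eq_compl_comm, eq_comm]
  rfl
end

section
/- There exists a partition of Cantor space 2^ω into two disjoint sets X and Y with X ∪ Y = 2^ω, both X and Y Bernstein sets, such that for every Polish space Z, neither the pair (Z, X) nor the pair (Z, Y) satisfies UU (where X and Y carry the subspace topology from 2^ω). -/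
/--  is a Bernstein subset of Cantor space: both  and its complement meet
every nonempty perfect subset. -/
def IsBernstein (B : Set (ℕ → Bool)) : Prop :=
  ∀ P : Set (ℕ → Bool), Perfect P → P.Nonempty →
    (B ∩ P).Nonempty ∧ (Bᶜ ∩ P).Nonempty

/-!
A UU witness on `Z × A`, pulled back along a continuous surjection `ℕ^ℕ → Z` and extended to
an open subset of `ℕ^ℕ × 2^ω`, gives a family of open sets `V u` (`u ∈ ℕ^ℕ`) whose traces on
`A` run through the open subsets of `A`, each trace determining its `V u`. There are only `𝔠`
such families, so a transfinite recursion of length `𝔠`, adding countably many points at each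
step either to `B` or to a set `C` disjoint from it, can split every perfect set and defeat
every family both for `A = B` and for `A = Bᶜ`.

A family is defeated for the side `A` as follows. If two distinct members have a countable
symmetric difference not yet met by `A`, that difference goes to the other side, so the two
traces coincide. Otherwise a fresh point `b` of some `V u₀` goes into `A`; the trace of
`V u₀ \ {b}` is then the trace of some `V u`, so `V u₀ ∆ V u` meets `A` exactly in `b`. This
difference cannot be countable (it would already meet `A` elsewhere), nor uncountable (it would
contain a perfect set, which a Bernstein set meets twice). If all `V u` are empty, `A` itself
is not a trace.
-/

open Set Cardinal Topology TopologicalSpace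
open scoped symmDiff

universe u

theorem mk_iUnion_lt_of_countable {α ι : Type u} {κ : Cardinal.{u}} (hκ : ℵ₀ < κ)
    (hι : #ι < κ) {s : ι → Set α} (hs : ∀ j, (s j).Countable) : #(⋃ j, s j) < κ :=
  (mk_iUnion_le _).trans_lt <|
    mul_lt_of_lt hκ.le hι ((ciSup_le' fun j => (hs j).le_aleph0).trans_lt hκ)

theorem nonempty_diff_of_mk_lt {α : Type*} {s t : Set α} (h : #t < #s) : (s \ t).Nonempty :=
  sdiff_nonempty.2 fun hst => (mk_le_mk_of_subset hst).not_gt h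

theorem mk_union_lt_continuum {α : Type*} {s t : Set α} (hs : #s < 𝔠) (ht : #t < 𝔠) :
    #(s ∪ t : Set α) < 𝔠 :=
  (mk_union_le s t).trans_lt (add_lt_of_lt aleph0_le_continuum hs ht)

section TransfiniteConstruction

variable {α I : Type u} [LinearOrder I] [WellFoundedLT I]

noncomputable def stage (next : I → Set α → Set α → Set α × Set α) : I → Set α × Set α :=
  WellFoundedLT.fix fun i ih => next i (⋃ j : Iio i, (ih j j.2).1) (⋃ j : Iio i, (ih j j.2).2)

theorem stage_eq (next : I → Set α → Set α → Set α × Set α) (i : I) :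
    stage next i = next i (⋃ j : Iio i, (stage next j).1) (⋃ j : Iio i, (stage next j).2) :=
  WellFoundedLT.fix_eq _ _

theorem disjoint_iUnion_stage {next : I → Set α → Set α → Set α × Set α}
    (hnext : ∀ i pb pc, Disjoint (next i pb pc).1 (next i pb pc).2 ∧
      Disjoint (next i pb pc).1 pc ∧ Disjoint pb (next i pb pc).2) :
    Disjoint (⋃ i, (stage next i).1) (⋃ i, (stage next i).2) := by
  refine disjoint_iUnion_left.2 fun i => disjoint_iUnion_right.2 fun j => ?_
  rcases lt_trichotomy i j with hij | rfl | hji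
  · rw [stage_eq next j]
    exact (hnext _ _ _).2.2.mono_left (subset_iUnion_of_subset ⟨i, hij⟩ (by rfl))
  · rw [stage_eq next i]
    exact (hnext _ _ _).1
  · rw [stage_eq next i]
    exact (hnext _ _ _).2.1.mono_right (subset_iUnion_of_subset ⟨j, hji⟩ (by rfl))

theorem exists_disjoint_forall_step_of_wellFoundedLT {κ : Cardinal.{u}} (hκ : ℵ₀ < κ)
    (hI : ∀ i : I, #(Iio i) < κ) (Step : I → Set α → Set α → Set α → Set α → Prop)
    (hstep : ∀ i (pb pc : Set α), #pb < κ → #pc < κ → ∃ nb nc : Set α, nb.Countable ∧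
      nc.Countable ∧ Disjoint nb nc ∧ Disjoint nb pc ∧ Disjoint pb nc ∧ Step i pb pc nb nc) :
    ∃ B C : Set α, Disjoint B C ∧
      ∀ i, ∃ pb pc nb nc, pb ∪ nb ⊆ B ∧ pc ∪ nc ⊆ C ∧ Step i pb pc nb nc := by
  -- Defaulting to `(∅, ∅)` on large arguments makes every stage countable by construction.
  have htotal : ∀ i pb pc, ∃ n : Set α × Set α, (n.1.Countable ∧ n.2.Countable) ∧
      (Disjoint n.1 n.2 ∧ Disjoint n.1 pc ∧ Disjoint pb n.2) ∧
      (#pb < κ → #pc < κ → Step i pb pc n.1 n.2) := by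
    intro i pb pc
    by_cases h : #pb < κ ∧ #pc < κ
    · obtain ⟨nb, nc, hb, hc, h₁, h₂, h₃, hS⟩ := hstep i pb pc h.1 h.2
      exact ⟨(nb, nc), ⟨hb, hc⟩, ⟨h₁, h₂, h₃⟩, fun _ _ => hS⟩
    · exact ⟨(∅, ∅), by simp, by simp, fun hb hc => (h ⟨hb, hc⟩).elim⟩
  choose next hcount hdisj hspec using htotal
  have hstage : ∀ j, (stage next j).1.Countable ∧ (stage next j).2.Countable := fun j => by
    rw [stage_eq]; exact hcount _ _ _
  refine ⟨_, _, disjoint_iUnion_stage hdisj, fun i => ⟨⋃ j : Iio i, (stage next j).1,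
    ⋃ j : Iio i, (stage next j).2, (stage next i).1, (stage next i).2, ?_, ?_, ?_⟩⟩
  · exact union_subset (iUnion_subset fun j => subset_iUnion (fun k => (stage next k).1) j)
      (subset_iUnion (fun k => (stage next k).1) i)
  · exact union_subset (iUnion_subset fun j => subset_iUnion (fun k => (stage next k).2) j)
      (subset_iUnion (fun k => (stage next k).2) i)
  · rw [stage_eq]
    exact hspec _ _ _ (mk_iUnion_lt_of_countable hκ (hI i) fun j => (hstage j).1)
      (mk_iUnion_lt_of_countable hκ (hI i) fun j => (hstage j).2)

end TransfiniteConstruction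

theorem exists_disjoint_forall_step {α D : Type u} {κ : Cardinal.{u}} (hκ : ℵ₀ < κ)
    (hD : #D ≤ κ) (Step : D → Set α → Set α → Set α → Set α → Prop)
    (hstep : ∀ d (pb pc : Set α), #pb < κ → #pc < κ → ∃ nb nc : Set α, nb.Countable ∧
      nc.Countable ∧ Disjoint nb nc ∧ Disjoint nb pc ∧ Disjoint pb nc ∧ Step d pb pc nb nc) :
    ∃ B C : Set α, Disjoint B C ∧
      ∀ d, ∃ pb pc nb nc, pb ∪ nb ⊆ B ∧ pc ∪ nc ⊆ C ∧ Step d pb pc nb nc := by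
  obtain ⟨e⟩ : Nonempty ((#D).ord.ToType ≃ D) := Cardinal.eq.1 (by rw [mk_toType, card_ord])
  have hI (i : (#D).ord.ToType) : #(Iio i) < κ :=
    (mk_Iio_lt i (by rw [mk_toType, card_ord, Ordinal.type_toType])).trans_le
      (by rw [mk_toType, card_ord]; exact hD)
  obtain ⟨B, C, hBC, h⟩ := exists_disjoint_forall_step_of_wellFoundedLT hκ hI
    (fun i => Step (e i)) (fun i => hstep (e i))
  exact ⟨B, C, hBC, fun d => by simpa using h (e.symm d)⟩

theorem continuum_le_mk_of_perfect {α : Type*} [TopologicalSpace α]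
    [SecondCountableTopology α] [IsCompletelyMetrizableSpace α] {P : Set α}
    (hP : Perfect P) (hne : P.Nonempty) : 𝔠 ≤ #P := by
  let := upgradeIsCompletelyMetrizable α
  obtain ⟨f, hfP, -, hf⟩ := hP.exists_nat_bool_injection hne
  simpa using lift_mk_le_lift_mk_of_injective ((injective_codRestrict fun y => hfP ⟨y, rfl⟩).2 hf)

theorem continuum_le_mk_of_isOpen {O : Set (ℕ → Bool)} (hO : IsOpen O) (hne : O.Nonempty) :
    𝔠 ≤ #O := by
  obtain ⟨x, hx⟩ := hne
  obtain ⟨_, ⟨z, n, rfl⟩, -, hsub⟩ :=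
    (PiNat.isTopologicalBasis_cylinders _).exists_subset_of_mem_open hx hO
  let f : (ℕ → Bool) → (ℕ → Bool) := fun y i => if i < n then z i else y (i - n)
  have hf : Function.Injective f := fun y y' h => funext fun k => by
    simpa [f] using congrFun h (k + n)
  have hfO : ∀ y, f y ∈ O := fun y => hsub fun i hi => if_pos hi
  simpa using mk_le_of_injective ((injective_codRestrict hfO).2 hf)

theorem exists_perfect_subset_diff {α : Type*} [TopologicalSpace α]
    [SecondCountableTopology α] [IsCompletelyMetrizableSpace α]
    {V V' : Set α} (hV : IsOpen V) (hV' : IsOpen V') (h : ¬(V \ V').Countable) :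
    ∃ P ⊆ V \ V', Perfect P ∧ P.Nonempty := by
  let := upgradeIsCompletelyMetrizable α
  obtain ⟨K, hK, hKV, hKU, -⟩ := hV.exists_iUnion_isClosed
  rw [← hKU, iUnion_sdiff, countable_iUnion_iff, not_forall] at h
  obtain ⟨n, hn⟩ := h
  obtain ⟨P, hP, hne, hPK⟩ :=
    exists_perfect_nonempty_of_isClosed_of_not_countable ((hK n).sdiff hV') hn
  exact ⟨P, hPK.trans (sdiff_subset_sdiff_left (hKV n)), hP, hne⟩

theorem exists_perfect_subset_symmDiff {α : Type*} [TopologicalSpace α]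
    [SecondCountableTopology α] [IsCompletelyMetrizableSpace α]
    {V V' : Set α} (hV : IsOpen V) (hV' : IsOpen V') (h : ¬(V ∆ V').Countable) :
    ∃ P ⊆ V ∆ V', Perfect P ∧ P.Nonempty := by
  rw [Set.symmDiff_def, countable_union, not_and_or] at h
  rcases h with h | h
  · obtain ⟨P, hPV, hP⟩ := exists_perfect_subset_diff hV hV' h
    exact ⟨P, hPV.trans le_sup_left, hP⟩
  · obtain ⟨P, hPV, hP⟩ := exists_perfect_subset_diff hV' hV h
    exact ⟨P, hPV.trans le_sup_right, hP⟩

theorem mk_setOf_isOpen_le {X : Type*} [TopologicalSpace X] [SecondCountableTopology X] :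
    #{U : Set X // IsOpen U} ≤ 𝔠 := by
  have hinj : Function.Injective fun U : {U : Set X // IsOpen U} =>
      {b : countableBasis X | b.1 ⊆ U.1} := by
    intro U U' h
    have key : ∀ s ∈ countableBasis X, s ⊆ U.1 ↔ s ⊆ U'.1 := fun s hs =>
      Set.ext_iff.1 h ⟨s, hs⟩
    have hB := isBasis_countableBasis X
    apply Subtype.ext
    calc U.1 = ⋃₀ {s | s ∈ countableBasis X ∧ s ⊆ U.1} := hB.open_eq_sUnion' U.2
      _ = ⋃₀ {s | s ∈ countableBasis X ∧ s ⊆ U'.1} := by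
        congr 1; ext s; exact and_congr_right (key s)
      _ = U'.1 := (hB.open_eq_sUnion' U'.2).symm
  calc #{U : Set X // IsOpen U} ≤ #(Set (countableBasis X)) := mk_le_of_injective hinj
    _ ≤ 2 ^ ℵ₀ := by
      rw [mk_set]; exact power_le_power_left two_ne_zero (countable_countableBasis X).le_aleph0
    _ = 𝔠 := two_power_aleph0

namespace IsBernstein

variable {B : Set (ℕ → Bool)}

theorem compl (hB : IsBernstein B) : IsBernstein Bᶜ := fun P hP hne => by
  simpa only [compl_compl, and_comm] using hB P hP hne

theorem nonempty (hB : IsBernstein B) : B.Nonempty := by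
  have huniv : ¬(univ : Set (ℕ → Bool)).Countable := by
    rw [countable_univ_iff, ← mk_le_aleph0_iff, not_le]
    simpa using aleph0_lt_continuum
  obtain ⟨P, hP, hne, -⟩ := exists_perfect_nonempty_of_isClosed_of_not_countable isClosed_univ huniv
  exact (hB P hP hne).1.mono inter_subset_left

theorem nontrivial_inter (hB : IsBernstein B) {P : Set (ℕ → Bool)} (hP : Perfect P)
    (hne : P.Nonempty) : (B ∩ P).Nontrivial := by
  obtain ⟨P₀, P₁, ⟨hP₀, hne₀, hP₀P⟩, ⟨hP₁, hne₁, hP₁P⟩, hdisj⟩ := hP.splitting hne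
  obtain ⟨x, hxB, hx⟩ := (hB P₀ hP₀ hne₀).1
  obtain ⟨y, hyB, hy⟩ := (hB P₁ hP₁ hne₁).1
  exact ⟨x, ⟨hxB, hP₀P hx⟩, y, ⟨hyB, hP₁P hy⟩, hdisj.ne_of_mem hx hy⟩

end IsBernstein

def IsUUFamily {T Y : Type*} [TopologicalSpace Y] (V : T → Set Y) (A : Set Y) : Prop :=
  (∀ W : Set A, IsOpen W → ∃ t, ((↑) : A → Y) ⁻¹' V t = W) ∧
    ∀ t t', ((↑) : A → Y) ⁻¹' V t = (↑) ⁻¹' V t' → V t = V t'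

theorem UU.exists_isUUFamily {Z Y : Type*} [TopologicalSpace Z] [PolishSpace Z]
    [TopologicalSpace Y] {A : Set Y} (h : UU Z A) :
    ∃ U : Set ((ℕ → ℕ) × Y), IsOpen U ∧ IsUUFamily (fun u => Prod.mk u ⁻¹' U) A := by
  obtain ⟨U, hU, huniq⟩ := h
  have : Nonempty Z := ⟨(huniq ∅ isOpen_empty).exists.choose⟩
  obtain ⟨f, hf, hfs⟩ := PolishSpace.exists_nat_nat_continuous_surjective Z
  obtain ⟨V, hV, rfl⟩ := (IsInducing.id.prodMap IsInducing.subtypeVal).isOpen_iff.1 hU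
  refine ⟨Prod.map f id ⁻¹' V, hV.preimage (hf.prodMap continuous_id), fun W hW => ?_,
    fun u u' huu' => ?_⟩
  · obtain ⟨x, hx, -⟩ := huniq W hW
    obtain ⟨u, rfl⟩ := hfs x
    exact ⟨u, hx⟩
  · have hfu : f u = f u' :=
      (huniq _ (hU.preimage (Continuous.prodMk_right (f u)))).unique rfl huu'.symm
    change Prod.mk (f u) ⁻¹' V = Prod.mk (f u') ⁻¹' V
    rw [hfu]

namespace IsUUFamily

variable {T Y : Type*} [TopologicalSpace Y] {V : T → Set Y} {A : Set Y}

theorem eq_of_disjoint_symmDiff (h : IsUUFamily V A) {t t' : T}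
    (hd : Disjoint (V t ∆ V t') A) : V t = V t' := by
  refine h.2 t t' (ext fun y => ?_)
  have hy : (y : Y) ∉ V t ∆ V t' := hd.notMem_of_mem_right y.2
  rw [mem_symmDiff] at hy
  simp only [mem_preimage]
  tauto

theorem exists_nonempty (h : IsUUFamily V A) (hA : A.Nonempty) : ∃ t, (V t).Nonempty := by
  obtain ⟨t, ht⟩ := h.1 univ isOpen_univ
  obtain ⟨a, ha⟩ := hA
  exact ⟨t, a, (Set.ext_iff.1 ht ⟨a, ha⟩).2 trivial⟩

theorem exists_symmDiff_inter_eq_singleton [T1Space Y] (h : IsUUFamily V A)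
    (hV : ∀ t, IsOpen (V t)) {t₀ : T} {b : Y} (hbA : b ∈ A) (hbV : b ∈ V t₀) :
    ∃ t, ∀ y ∈ A, y ∈ V t₀ ∆ V t ↔ y = b := by
  obtain ⟨t, ht⟩ := h.1 _ (((hV t₀).sdiff isClosed_singleton).preimage continuous_subtype_val)
  refine ⟨t, fun y hy => ?_⟩
  have hyt : y ∈ V t ↔ y ∈ V t₀ ∧ y ≠ b := Set.ext_iff.1 ht ⟨y, hy⟩
  rw [mem_symmDiff, hyt]
  constructor
  · tauto
  · rintro rfl; tauto

end IsUUFamily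

theorem IsUUFamily.exists_countable_symmDiff {T : Type*} {V : T → Set (ℕ → Bool)}
    {A : Set (ℕ → Bool)} (h : IsUUFamily V A) (hV : ∀ t, IsOpen (V t)) (hA : IsBernstein A) {t₀ : T}
    {b : ℕ → Bool} (hbA : b ∈ A) (hbV : b ∈ V t₀) {S : Set (ℕ → Bool)} (hSA : S ⊆ A)
    (hbS : b ∉ S) :
    ∃ t, V t₀ ≠ V t ∧ (V t₀ ∆ V t).Countable ∧ Disjoint S (V t₀ ∆ V t) := by
  obtain ⟨t, ht⟩ := h.exists_symmDiff_inter_eq_singleton hV hbA hbV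
  refine ⟨t, fun heq => ?_, ?_, disjoint_left.2 fun y hyS hy => hbS ?_⟩
  · simpa [heq] using (ht b hbA).2 rfl
  · by_contra hunc
    obtain ⟨P, hPV, hP, hne⟩ := exists_perfect_subset_symmDiff (hV t₀) (hV t) hunc
    obtain ⟨x, ⟨hxA, hxP⟩, y, ⟨hyA, hyP⟩, hxy⟩ := hA.nontrivial_inter hP hne
    exact hxy (((ht x hxA).1 (hPV hxP)).trans ((ht y hyA).1 (hPV hyP)).symm)
  · rwa [← (ht y (hSA hyS)).1 hy]

def BlocksFamily {T : Type*} (V : T → Set (ℕ → Bool)) (S m : Set (ℕ → Bool)) : Prop :=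
  ∀ A, IsBernstein A → S ⊆ A → Disjoint m A → ¬IsUUFamily V A

theorem exists_blocksFamily {T : Type*} {V : T → Set (ℕ → Bool)} (hV : ∀ t, IsOpen (V t))
    {p q : Set (ℕ → Bool)} (hp : #p < 𝔠) (hq : #q < 𝔠) :
    ∃ n m : Set (ℕ → Bool), n.Countable ∧ m.Countable ∧ Disjoint n m ∧ Disjoint n q ∧
      Disjoint p m ∧ BlocksFamily V (p ∪ n) m := by
  by_cases hpair : ∃ t t', V t ≠ V t' ∧ (V t ∆ V t').Countable ∧ Disjoint p (V t ∆ V t')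
  · obtain ⟨t, t', hne, hct, hdisj⟩ := hpair
    exact ⟨∅, _, countable_empty, hct, empty_disjoint _, empty_disjoint _, hdisj,
      fun A _ _ hm h => hne (h.eq_of_disjoint_symmDiff hm)⟩
  push Not at hpair
  by_cases hsect : ∃ t, (V t).Nonempty
  · obtain ⟨t₀, hne⟩ := hsect
    obtain ⟨b, hbV, hbpq⟩ := nonempty_diff_of_mk_lt
      ((mk_union_lt_continuum hp hq).trans_le (continuum_le_mk_of_isOpen (hV t₀) hne))
    refine ⟨{b}, ∅, countable_singleton b, countable_empty, disjoint_empty _,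
      disjoint_singleton_left.2 fun hb => hbpq (Or.inr hb), disjoint_empty _,
      fun A hA hS _ h => ?_⟩
    obtain ⟨t, hne, hct, hdisj⟩ := h.exists_countable_symmDiff hV hA (hS (Or.inr rfl)) hbV
      (subset_union_left.trans hS) fun hb => hbpq (Or.inl hb)
    exact hpair t₀ t hne hct hdisj
  · push Not at hsect
    refine ⟨∅, ∅, countable_empty, countable_empty, empty_disjoint _, empty_disjoint _,
      disjoint_empty _, fun A hA _ _ h => ?_⟩
    obtain ⟨t, ht⟩ := h.exists_nonempty hA.nonempty
    exact ht.ne_empty (hsect t)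

abbrev OpenCode : Type := {U : Set ((ℕ → ℕ) × (ℕ → Bool)) // IsOpen U}

abbrev NonemptyPerfect : Type := {P : Set (ℕ → Bool) // Perfect P ∧ P.Nonempty}

/-- `pb`, `pc` are the points already put into `B` and into `C`, and `nb`, `nc` the points
added at this step. -/
def Requirement : OpenCode ⊕ OpenCode ⊕ NonemptyPerfect →
    Set (ℕ → Bool) → Set (ℕ → Bool) → Set (ℕ → Bool) → Set (ℕ → Bool) → Prop
  | .inl U, pb, _, nb, nc => BlocksFamily (fun u => Prod.mk u ⁻¹' U.1) (pb ∪ nb) nc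
  | .inr (.inl U), _, pc, nb, nc => BlocksFamily (fun u => Prod.mk u ⁻¹' U.1) (pc ∪ nc) nb
  | .inr (.inr P), _, _, nb, nc => (nb ∩ P.1).Nonempty ∧ (nc ∩ P.1).Nonempty

theorem mk_requirementIndex_le : #(OpenCode ⊕ OpenCode ⊕ NonemptyPerfect) ≤ 𝔠 := by
  have hcode : #OpenCode ≤ 𝔠 := mk_setOf_isOpen_le
  have hperf : #NonemptyPerfect ≤ 𝔠 := by
    refine (mk_le_of_injective (f := fun P : NonemptyPerfect =>
      (⟨P.1ᶜ, P.2.1.closed.isOpen_compl⟩ : {U : Set (ℕ → Bool) // IsOpen U})) ?_).trans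
      mk_setOf_isOpen_le
    exact fun P Q h => Subtype.ext (compl_inj_iff.1 (congrArg Subtype.val h))
  simp only [mk_sum, lift_id]
  exact add_le_of_le aleph0_le_continuum hcode (add_le_of_le aleph0_le_continuum hcode hperf)

theorem exists_requirement (d : OpenCode ⊕ OpenCode ⊕ NonemptyPerfect)
    (pb pc : Set (ℕ → Bool)) (hb : #pb < 𝔠) (hc : #pc < 𝔠) :
    ∃ nb nc : Set (ℕ → Bool), nb.Countable ∧ nc.Countable ∧ Disjoint nb nc ∧
      Disjoint nb pc ∧ Disjoint pb nc ∧ Requirement d pb pc nb nc := by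
  have hV (U : OpenCode) (u : ℕ → ℕ) : IsOpen (Prod.mk u ⁻¹' U.1) :=
    U.2.preimage (Continuous.prodMk_right u)
  rcases d with U | U | ⟨P, hP, hne⟩
  · exact exists_blocksFamily (hV U) hb hc
  · obtain ⟨n, m, hn, hm, hnm, hnb, hcm, hblock⟩ := exists_blocksFamily (hV U) hc hb
    exact ⟨m, n, hm, hn, hnm.symm, hcm.symm, hnb.symm, hblock⟩
  · have hsmall := mk_union_lt_continuum hb hc
    have hP𝔠 := continuum_le_mk_of_perfect hP hne
    obtain ⟨x, hxP, hx⟩ := nonempty_diff_of_mk_lt (hsmall.trans_le hP𝔠)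
    have hx𝔠 : #({x} : Set (ℕ → Bool)) < 𝔠 :=
      (mk_singleton x).trans_lt (one_lt_aleph0.trans aleph0_lt_continuum)
    obtain ⟨y, hyP, hy⟩ :=
      nonempty_diff_of_mk_lt ((mk_union_lt_continuum hsmall hx𝔠).trans_le hP𝔠)
    refine ⟨{x}, {y}, countable_singleton x, countable_singleton y, ?_, ?_, ?_, ⟨x, rfl, hxP⟩,
      ⟨y, rfl, hyP⟩⟩
    · exact disjoint_singleton.2 fun hxy => hy (Or.inr hxy.symm)
    · exact disjoint_singleton_left.2 fun hxc => hx (Or.inr hxc)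
    · exact disjoint_singleton_right.2 fun hyb => hy (Or.inl (Or.inl hyb))

theorem stmt_3 : ∃ X Y : Set (ℕ → Bool),
    X ∩ Y = ∅ ∧ X ∪ Y = Set.univ ∧ IsBernstein X ∧ IsBernstein Y ∧
    ∀ (Z : Type) [TopologicalSpace Z] [PolishSpace Z],
      ¬ UU Z X ∧ ¬ UU Z Y := by
  obtain ⟨B, C, hBC, hreq⟩ := exists_disjoint_forall_step aleph0_lt_continuum
    mk_requirementIndex_le Requirement exists_requirement
  have hCB : C ⊆ Bᶜ := hBC.symm.subset_compl_right
  have hB : IsBernstein B := fun P hP hne => by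
    obtain ⟨_, _, nb, nc, hb, hc, hnb, hnc⟩ := hreq (.inr (.inr ⟨P, hP, hne⟩))
    exact ⟨hnb.mono (inter_subset_inter_left _ (subset_union_right.trans hb)),
      hnc.mono (inter_subset_inter_left _ ((subset_union_right.trans hc).trans hCB))⟩
  refine ⟨B, Bᶜ, inter_compl_self B, union_compl_self B, hB, hB.compl,
    fun Z _ _ => ⟨fun h => ?_, fun h => ?_⟩⟩
  · obtain ⟨U, hU, hfam⟩ := h.exists_isUUFamily
    obtain ⟨pb, _, nb, nc, hb, hc, hblock⟩ := hreq (.inl ⟨U, hU⟩)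
    exact hblock B hB hb (hBC.mono_right (subset_union_right.trans hc)).symm hfam
  · obtain ⟨U, hU, hfam⟩ := h.exists_isUUFamily
    obtain ⟨_, pc, nb, nc, hb, hc, hblock⟩ := hreq (.inr (.inl ⟨U, hU⟩))
    exact hblock Bᶜ hB.compl (hc.trans hCB)
      (disjoint_compl_right.mono_left (subset_union_right.trans hb)) hfam
end

section
/- Suppose f : X → Y is a continuous bijection between topological spaces and the pair (Y, Z) satisfies UU. Then the pair (X, Z) satisfies UU. -/
theorem stmt_5 (X Y Z : Type*) [TopologicalSpace X] [TopologicalSpace Y]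
    [TopologicalSpace Z] (f : X → Y) (hf : Continuous f) (hbij : Function.Bijective f)
    (h : UU Y Z) : UU X Z := by
  obtain ⟨U, hU, huniq⟩ := h
  -- the section of the pulled-back set over `x` is the section of `U` over `f x`
  refine ⟨Prod.map f id ⁻¹' U, hU.preimage (hf.prodMap continuous_id), fun W hW => ?_⟩
  obtain ⟨y, hyW, hy_unique⟩ := huniq W hW
  obtain ⟨x, rfl⟩ := hbij.surjective y
  exact ⟨x, hyW, fun x' hx' => hbij.injective (hy_unique (f x') hx')⟩
end

section
/- There exists a continuous bijection from Baire space ω^ω onto Cantor space 2^ω. -/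
/-!
Cut `x : ℕ → ℕ` into blocks `0ʳ (k+1)` and send each block to `0ᵐ 1` with `m = Nat.pair r k`;
a final infinite run of zeros goes to an infinite run of `false`s. Since `Nat.pair r k ≥ r`, the
zeros of an unfinished block can already be emitted as `false`s, so the encoder `encode r` (with
`r` the current run of zeros) is monotone on finite prefixes and each output bit depends on
finitely many inputs, which gives continuity. The decoder reads `0ˢ 1` back as the block coded by
`Nat.unpair s`; on finite words the two maps invert each other up to trailing zeros, and passing to
the limits of the chains of prefixes makes them exact inverses on sequences.
-/

open List

namespace BaireToCantor

def encode : ℕ → List ℕ → List Bool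
  | r, [] => replicate r false
  | r, 0 :: l => encode (r + 1) l
  | r, (k + 1) :: l => replicate (Nat.pair r k) false ++ true :: encode 0 l

def decode : ℕ → List Bool → List ℕ
  | _, [] => []
  | s, false :: l => decode (s + 1) l
  | s, true :: l => replicate (Nat.unpair s).1 0 ++ ((Nat.unpair s).2 + 1) :: decode 0 l

lemma le_length_encode : ∀ (r : ℕ) (l : List ℕ), r + l.length ≤ (encode r l).length
  | r, [] => by simp [encode]
  | r, 0 :: l => by
    have := le_length_encode (r + 1) l
    simp only [encode, length_cons]
    omega
  | r, (k + 1) :: l => by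
    have := le_length_encode 0 l
    have := Nat.left_le_pair r k
    simp only [encode, length_append, length_replicate, length_cons]
    omega

lemma replicate_prefix_replicate {α : Type*} (a : α) {m n : ℕ} (h : m ≤ n) :
    replicate m a <+: replicate n a :=
  prefix_replicate_iff.2 ⟨by simpa using h, by simp⟩

lemma replicate_prefix_encode : ∀ (r : ℕ) (l : List ℕ), replicate r false <+: encode r l
  | _, [] => prefix_rfl
  | r, 0 :: l =>
    (replicate_prefix_replicate false r.le_succ).trans (replicate_prefix_encode (r + 1) l)
  | r, (k + 1) :: _ =>
    (replicate_prefix_replicate false (Nat.left_le_pair r k)).trans (prefix_append _ _)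

lemma encode_prefix_encode_append : ∀ (r : ℕ) (l l' : List ℕ), encode r l <+: encode r (l ++ l')
  | r, [], l' => replicate_prefix_encode r l'
  | r, 0 :: l, l' => encode_prefix_encode_append (r + 1) l l'
  | r, (k + 1) :: l, l' => by
    simpa [encode] using encode_prefix_encode_append 0 l l'

lemma decode_prefix_decode_append : ∀ (s : ℕ) (l l' : List Bool), decode s l <+: decode s (l ++ l')
  | _, [], _ => nil_prefix
  | s, false :: l, l' => decode_prefix_decode_append (s + 1) l l'
  | s, true :: l, l' => by
    simpa [decode] using decode_prefix_decode_append 0 l l'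

lemma encode_prefix_encode {r : ℕ} {l l' : List ℕ} (h : l <+: l') : encode r l <+: encode r l' := by
  obtain ⟨t, rfl⟩ := h
  exact encode_prefix_encode_append r l t

lemma decode_prefix_decode {s : ℕ} {l l' : List Bool} (h : l <+: l') :
    decode s l <+: decode s l' := by
  obtain ⟨t, rfl⟩ := h
  exact decode_prefix_decode_append s l t

lemma encode_replicate_append : ∀ (r m : ℕ) (l : List ℕ),
    encode r (replicate m 0 ++ l) = encode (r + m) l
  | r, 0, l => rfl
  | r, m + 1, l => by
    rw [replicate_succ, cons_append, encode, encode_replicate_append, Nat.add_right_comm]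
    rfl

lemma decode_replicate_append : ∀ (s m : ℕ) (l : List Bool),
    decode s (replicate m false ++ l) = decode (s + m) l
  | s, 0, l => rfl
  | s, m + 1, l => by
    rw [replicate_succ, cons_append, decode, decode_replicate_append, Nat.add_right_comm]
    rfl

lemma encode_append_replicate (t : ℕ) : ∀ (r : ℕ) (l : List ℕ),
    encode r (l ++ replicate t 0) = encode r l ++ replicate t false
  | r, [] => by
    rw [nil_append, ← append_nil (replicate t 0), encode_replicate_append, encode, encode,
      replicate_add]
  | r, 0 :: l => encode_append_replicate t (r + 1) l
  | r, (k + 1) :: l => by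
    rw [cons_append, encode, encode, encode_append_replicate t 0 l]
    simp

lemma decode_encode : ∀ (r : ℕ) (l : List ℕ),
    ∃ j, decode 0 (encode r l) ++ replicate j 0 = replicate r 0 ++ l
  | r, [] => ⟨r, by
    rw [encode, ← append_nil (replicate r false), decode_replicate_append]
    simp [decode]⟩
  | r, 0 :: l => by
    obtain ⟨j, hj⟩ := decode_encode (r + 1) l
    exact ⟨j, by simp [encode, hj, replicate_succ']⟩
  | r, (k + 1) :: l => by
    obtain ⟨j, hj⟩ := decode_encode 0 l
    refine ⟨j, ?_⟩
    simp only [replicate_zero, nil_append] at hj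
    rw [encode, decode_replicate_append, zero_add, decode, Nat.unpair_pair]
    simp [hj]

lemma encode_decode : ∀ (s : ℕ) (l : List Bool),
    ∃ j, encode 0 (decode s l) ++ replicate j false = replicate s false ++ l
  | s, [] => ⟨s, by simp [decode, encode]⟩
  | s, false :: l => by
    obtain ⟨j, hj⟩ := encode_decode (s + 1) l
    exact ⟨j, by simp [decode, hj, replicate_succ']⟩
  | s, true :: l => by
    obtain ⟨j, hj⟩ := encode_decode 0 l
    refine ⟨j, ?_⟩
    simp only [replicate_zero, nil_append] at hj
    rw [decode, encode_replicate_append, zero_add, encode, Nat.pair_unpair]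
    simp [hj]

section ChainLimit

variable {α : Type*}

def initSeg (x : ℕ → α) (m : ℕ) : List α := ofFn fun i : Fin m => x i

@[simp] lemma length_initSeg (x : ℕ → α) (m : ℕ) : (initSeg x m).length = m := length_ofFn

@[simp] lemma getElem_initSeg (x : ℕ → α) (m i : ℕ) (h : i < (initSeg x m).length) :
    (initSeg x m)[i] = x i := by
  simp [initSeg]

lemma initSeg_prefix_initSeg (x : ℕ → α) {m m' : ℕ} (h : m ≤ m') :
    initSeg x m <+: initSeg x m' := by
  rw [prefix_iff_eq_take]
  apply ext_getElem <;> simp [h]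

lemma continuous_comp_initSeg [TopologicalSpace α] [DiscreteTopology α] {β : Type*}
    [TopologicalSpace β] (g : List α → β) (m : ℕ) :
    Continuous fun x : ℕ → α => g (initSeg x m) :=
  (continuous_of_discreteTopology (f := fun v : Fin m → α => g (ofFn v))).comp
    (continuous_pi fun i => continuous_apply (i : ℕ))

open Classical in
noncomputable def chainLimit (L : ℕ → List α) (d : α) (n : ℕ) : α :=
  if h : ∃ m, n < (L m).length then (L h.choose)[n]'h.choose_spec else d

variable {L : ℕ → List α} {d : α}

lemma chainLimit_eq_getElem (hL : ∀ ⦃m m'⦄, m ≤ m' → L m <+: L m') {m n : ℕ}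
    (hn : n < (L m).length) : chainLimit L d n = (L m)[n] := by
  have h : ∃ m, n < (L m).length := ⟨m, hn⟩
  rw [chainLimit, dif_pos h]
  rcases le_total h.choose m with hle | hle
  · exact (hL hle).getElem _
  · exact ((hL hle).getElem hn).symm

lemma chainLimit_of_forall_length_le {n : ℕ} (hn : ∀ m, (L m).length ≤ n) :
    chainLimit L d n = d := by
  rw [chainLimit, dif_neg]
  simpa using hn

lemma initSeg_chainLimit (hL : ∀ ⦃m m'⦄, m ≤ m' → L m <+: L m') (m : ℕ) :
    initSeg (chainLimit L d) (L m).length = L m := by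
  apply ext_getElem (by simp)
  intro i _ hi
  rw [getElem_initSeg, chainLimit_eq_getElem hL hi]

lemma initSeg_chainLimit_prefix (hL : ∀ ⦃m m'⦄, m ≤ m' → L m <+: L m') {k m : ℕ}
    (hm : m ≤ (L k).length) : initSeg (chainLimit L d) m <+: L k := by
  rw [← initSeg_chainLimit hL k]
  exact initSeg_prefix_initSeg _ hm

lemma initSeg_chainLimit_of_forall_length_le (hL : ∀ ⦃m m'⦄, m ≤ m' → L m <+: L m') {K m : ℕ}
    (hK : ∀ k, (L k).length ≤ (L K).length) (hm : (L K).length ≤ m) :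
    initSeg (chainLimit L d) m = L K ++ replicate (m - (L K).length) d := by
  apply ext_getElem (by simp; omega)
  intro i hi _
  rw [getElem_initSeg]
  rcases lt_or_ge i (L K).length with hiK | hiK
  · rw [chainLimit_eq_getElem hL hiK, getElem_append_left hiK]
  · rw [chainLimit_of_forall_length_le fun k => (hK k).trans hiK, getElem_append_right hiK,
      getElem_replicate]

lemma eq_chainLimit (hL : ∀ ⦃m m'⦄, m ≤ m' → L m <+: L m') {x : ℕ → α}
    (hx : ∀ m, ∃ N, L m <+: initSeg x N) (hd : ∀ n, (∀ m, (L m).length ≤ n) → x n = d) :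
    x = chainLimit L d := by
  funext n
  by_cases h : ∃ m, n < (L m).length
  · obtain ⟨m, hm⟩ := h
    obtain ⟨N, hN⟩ := hx m
    rw [chainLimit_eq_getElem hL hm, hN.getElem hm, getElem_initSeg]
  · simp only [not_exists, not_lt] at h
    rw [hd n h, chainLimit_of_forall_length_le h]

lemma exists_length_max_of_forall_length_le (hL : ∀ ⦃m m'⦄, m ≤ m' → L m <+: L m') {n : ℕ}
    (hn : ∀ m, (L m).length ≤ n) :
    ∃ K, (∀ k, (L k).length ≤ (L K).length) ∧ ∀ k ≥ K, L k = L K := by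
  have hbdd : BddAbove (Set.range fun m => (L m).length) := ⟨n, Set.forall_mem_range.2 hn⟩
  obtain ⟨K, hK⟩ := Nat.sSup_mem (Set.range_nonempty _) hbdd
  have hmax k : (L k).length ≤ (L K).length := (le_csSup hbdd ⟨k, rfl⟩).trans_eq hK.symm
  exact ⟨K, hmax, fun k hk => ((hL hk).eq_of_length (le_antisymm (hL hk).length_le (hmax k))).symm⟩

end ChainLimit

noncomputable def toCantor (x : ℕ → ℕ) : ℕ → Bool :=
  chainLimit (fun m => encode 0 (initSeg x m)) false

noncomputable def ofCantor (y : ℕ → Bool) : ℕ → ℕ :=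
  chainLimit (fun m => decode 0 (initSeg y m)) 0

lemma encode_initSeg_mono (x : ℕ → ℕ) ⦃m m' : ℕ⦄ (h : m ≤ m') :
    encode 0 (initSeg x m) <+: encode 0 (initSeg x m') :=
  encode_prefix_encode (initSeg_prefix_initSeg x h)

lemma decode_initSeg_mono (y : ℕ → Bool) ⦃m m' : ℕ⦄ (h : m ≤ m') :
    decode 0 (initSeg y m) <+: decode 0 (initSeg y m') :=
  decode_prefix_decode (initSeg_prefix_initSeg y h)

lemma le_length_encode_initSeg (x : ℕ → ℕ) (m : ℕ) : m ≤ (encode 0 (initSeg x m)).length := by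
  simpa using le_length_encode 0 (initSeg x m)

lemma initSeg_toCantor (x : ℕ → ℕ) (m : ℕ) :
    initSeg (toCantor x) (encode 0 (initSeg x m)).length = encode 0 (initSeg x m) :=
  initSeg_chainLimit (encode_initSeg_mono x) m

lemma toCantor_apply (x : ℕ → ℕ) (n : ℕ) :
    toCantor x n = (encode 0 (initSeg x (n + 1))).getD n false := by
  have hn : n < (encode 0 (initSeg x (n + 1))).length := le_length_encode_initSeg x (n + 1)
  rw [toCantor, chainLimit_eq_getElem (encode_initSeg_mono x) hn, getD_eq_getElem]

theorem continuous_toCantor : Continuous toCantor :=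
  continuous_pi fun n => by
    simp_rw [toCantor_apply]
    exact continuous_comp_initSeg (fun l => (encode 0 l).getD n false) (n + 1)

theorem ofCantor_toCantor (x : ℕ → ℕ) : ofCantor (toCantor x) = x := by
  refine (eq_chainLimit (decode_initSeg_mono _) (fun m => ⟨m, ?_⟩) (fun n hn => ?_)).symm
  · obtain ⟨j, hj⟩ := decode_encode 0 (initSeg x m)
    have hpre : initSeg (toCantor x) m <+: encode 0 (initSeg x m) :=
      initSeg_chainLimit_prefix (encode_initSeg_mono x) (le_length_encode_initSeg x m)
    exact (decode_prefix_decode hpre).trans ⟨_, by simpa using hj⟩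
  · obtain ⟨j, hj⟩ := decode_encode 0 (initSeg x (n + 1))
    have hlen : (decode 0 (encode 0 (initSeg x (n + 1)))).length ≤ n := by
      simpa [initSeg_toCantor] using hn (encode 0 (initSeg x (n + 1))).length
    simp only [replicate_zero, nil_append] at hj
    have hxn : (initSeg x (n + 1))[n]? = some (x n) := by simp
    rw [← hj, getElem?_append_right hlen, getElem?_replicate] at hxn
    simp only [Option.ite_none_right_eq_some, Option.some.injEq] at hxn
    exact hxn.2.symm

lemma exists_encode_initSeg_ofCantor_prefix (y : ℕ → Bool) (m : ℕ) :
    ∃ N, encode 0 (initSeg (ofCantor y) m) <+: initSeg y N := by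
  by_cases h : ∃ k, m ≤ (decode 0 (initSeg y k)).length
  · obtain ⟨k, hk⟩ := h
    have hpre : initSeg (ofCantor y) m <+: decode 0 (initSeg y k) :=
      initSeg_chainLimit_prefix (decode_initSeg_mono y) hk
    obtain ⟨j, hj⟩ := encode_decode 0 (initSeg y k)
    exact ⟨k, (encode_prefix_encode hpre).trans ⟨_, by simpa using hj⟩⟩
  · simp only [not_exists, not_le] at h
    obtain ⟨K, hmax, hstab⟩ :=
      exists_length_max_of_forall_length_le (decode_initSeg_mono y) fun k => (h k).le
    rw [ofCantor, initSeg_chainLimit_of_forall_length_le (decode_initSeg_mono y) hmax (h K).le,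
      encode_append_replicate]
    obtain ⟨N, hKN, hN⟩ : ∃ N, K ≤ N ∧ (encode 0 (decode 0 (initSeg y K))).length + m ≤ N :=
      ⟨K + (encode 0 (decode 0 (initSeg y K))).length + m, by omega, by omega⟩
    obtain ⟨j, hj⟩ := encode_decode 0 (initSeg y N)
    simp only [replicate_zero, nil_append, hstab N hKN] at hj
    have hlen := congrArg length hj
    simp only [length_append, length_replicate, length_initSeg] at hlen
    refine ⟨N, ?_⟩
    rw [← hj]
    exact (prefix_append_right_inj _).2 (replicate_prefix_replicate false (by omega))

theorem toCantor_ofCantor (y : ℕ → Bool) : toCantor (ofCantor y) = y := by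
  refine (eq_chainLimit (encode_initSeg_mono _) (exists_encode_initSeg_ofCantor_prefix y)
    fun n hn => ?_).symm
  have := le_length_encode_initSeg (ofCantor y) (n + 1)
  have := hn (n + 1)
  omega

end BaireToCantor

theorem stmt_6 : ∃ f : (ℕ → ℕ) → (ℕ → Bool), Continuous f ∧ Function.Bijective f :=
  ⟨BaireToCantor.toCantor, BaireToCantor.continuous_toCantor,
    Function.bijective_iff_has_inverse.2 ⟨BaireToCantor.ofCantor,
      BaireToCantor.ofCantor_toCantor, BaireToCantor.toCantor_ofCantor⟩⟩
end

section
/- If the pair (2^ω, Y) satisfies UU for a topological space Y, then the pair (ω^ω, Y) satisfies UU. -/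
open Function

theorem UU.of_continuous_bijective {X X' Y : Type*} [TopologicalSpace X] [TopologicalSpace X']
    [TopologicalSpace Y] {f : X' → X} (hf : Continuous f) (hbij : Bijective f) (h : UU X Y) :
    UU X' Y := by
  obtain ⟨U, hU, hsec⟩ := h
  refine ⟨{p | (f p.1, p.2) ∈ U}, hU.preimage (hf.prodMap continuous_id), fun W hW => ?_⟩
  obtain ⟨x, hx, hx_unique⟩ := hsec W hW
  obtain ⟨x', rfl⟩ := hbij.surjective x
  exact ⟨x', hx, fun x'' hx'' => hbij.injective (hx_unique (f x'') hx'')⟩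

namespace BlockCode

variable {A B : Type*}

def blockCons (a b : A) (k : ℕ) (x : ℕ → A) (i : ℕ) : A :=
  if i < k then a else if i = k then b else x (i - k - 1)

theorem blockCons_shift_eq {a : A} {k : ℕ} {x : ℕ → A} (h : ∀ i < k, x i = a) :
    blockCons a (x k) k (fun i => x (i + k + 1)) = x := by
  funext i
  unfold blockCons
  split_ifs with h1 h2
  · exact (h i h1).symm
  · rw [h2]
  · dsimp only
    congr 1
    omega

theorem eq_const_or_eq_blockCons (a : A) (x : ℕ → A) :
    x = (fun _ => a) ∨ ∃ k b x', b ≠ a ∧ x = blockCons a b k x' := by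
  classical
  by_cases h : ∃ i, x i ≠ a
  · refine .inr ⟨Nat.find h, _, _, Nat.find_spec h, (blockCons_shift_eq fun i hi => ?_).symm⟩
    simpa using Nat.find_min h hi
  · push Not at h
    exact .inl (funext h)

theorem eq_of_bisim (a : A) (R : (ℕ → A) → (ℕ → A) → Prop)
    (hR : ∀ x y, R x y → x = y ∨
      ∃ b k x' y', x = blockCons a b k x' ∧ y = blockCons a b k y' ∧ R x' y')
    {x y : ℕ → A} (hxy : R x y) : x = y := by
  funext n
  induction n using Nat.strong_induction_on generalizing x y with
  | _ n ih =>
    obtain rfl | ⟨b, k, x', y', rfl, rfl, hR'⟩ := hR x y hxy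
    · rfl
    · unfold blockCons
      split_ifs
      · rfl
      · rfl
      · exact ih _ (by omega) hR'

open Classical in
/-- `recode a a' τ` reads `x` as a concatenation of blocks `a^k b` with `b ≠ a` and replaces each
such block by `a'^l b'`, where `(l, b') = τ k b`; a tail `a a a …` becomes `a' a' a' …`. -/
noncomputable def recode (a : A) (a' : B) (τ : ℕ → A → ℕ × B) (x : ℕ → A) (n : ℕ) : B :=
  if h : ∃ i, x i ≠ a then
    let k := Nat.find h
    if n < (τ k (x k)).1 then a'
    else if n = (τ k (x k)).1 then (τ k (x k)).2
    else recode a a' τ (fun i => x (i + k + 1)) (n - (τ k (x k)).1 - 1)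
  else a'
termination_by n
decreasing_by omega

variable {a : A} {a' : B} {τ : ℕ → A → ℕ × B}

theorem recode_const : recode a a' τ (fun _ => a) = fun _ => a' := by
  funext n
  rw [recode, dif_neg (by simp)]

open Classical in
theorem recode_blockCons {b : A} (hb : b ≠ a) (k : ℕ) (x : ℕ → A) :
    recode a a' τ (blockCons a b k x) = blockCons a' (τ k b).2 (τ k b).1 (recode a a' τ x) := by
  funext n
  have h : ∃ i, blockCons a b k x i ≠ a := ⟨k, by simpa [blockCons] using hb⟩
  have hk : Nat.find h = k :=
    (Nat.find_eq_iff h).mpr ⟨by simpa [blockCons] using hb, fun i hi => by simp [blockCons, hi]⟩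
  have hb' : blockCons a b k x k = b := by simp [blockCons]
  have hx : (fun i => blockCons a b k x (i + k + 1)) = x := by
    funext i
    rw [blockCons, if_neg (by omega), if_neg (by omega)]
    congr 1
    omega
  rw [recode, dif_pos h]
  simp only [hk, hb', hx]
  rfl

theorem recode_leftInverse {σ : ℕ → B → ℕ × A}
    (hτσ : ∀ k b, b ≠ a → (τ k b).2 ≠ a' ∧ σ (τ k b).1 (τ k b).2 = (k, b)) :
    LeftInverse (recode a' a σ) (recode a a' τ) := by
  intro x
  refine (eq_of_bisim a (fun x y => y = recode a' a σ (recode a a' τ x)) ?_ rfl).symm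
  rintro x _ rfl
  obtain rfl | ⟨k, b, x', hb, rfl⟩ := eq_const_or_eq_blockCons a x
  · left
    rw [recode_const, recode_const]
  · right
    obtain ⟨hb', hσ⟩ := hτσ k b hb
    refine ⟨b, k, x', _, rfl, ?_, rfl⟩
    rw [recode_blockCons hb, recode_blockCons hb', hσ]

theorem recode_apply_of_forall_le (hτ : ∀ k b, k ≤ (τ k b).1) {x : ℕ → A} {n : ℕ}
    (hx : ∀ i ≤ n, x i = a) : recode a a' τ x n = a' := by
  obtain rfl | ⟨k, b, x', hb, rfl⟩ := eq_const_or_eq_blockCons a x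
  · rw [recode_const]
  · have hk : n < k := by
      by_contra! hk
      exact hb (by simpa [blockCons] using hx k hk)
    rw [recode_blockCons hb, blockCons, if_pos (hk.trans_le (hτ k b))]

theorem recode_apply_eq_of_mem_cylinder (hτ : ∀ k b, k ≤ (τ k b).1) {x y : ℕ → A} {n : ℕ}
    (hxy : y ∈ PiNat.cylinder x (n + 1)) : recode a a' τ y n = recode a a' τ x n := by
  classical
  induction n using Nat.strong_induction_on generalizing x y with
  | _ n ih =>
    rw [PiNat.mem_cylinder_iff] at hxy
    by_cases hx : ∀ i ≤ n, x i = a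
    · rw [recode_apply_of_forall_le hτ hx,
        recode_apply_of_forall_le hτ fun i hi => (hxy i (by omega)).trans (hx i hi)]
    obtain ⟨k, hkn, hxk, hk⟩ : ∃ k ≤ n, (∀ i < k, x i = a) ∧ x k ≠ a := by
      push Not at hx
      obtain ⟨j, hjn, hxj⟩ := hx
      have hex : ∃ i, x i ≠ a := ⟨j, hxj⟩
      exact ⟨Nat.find hex, (Nat.find_min' hex hxj).trans hjn,
        fun i hi => not_not.mp (Nat.find_min hex hi), Nat.find_spec hex⟩
    have hyk : ∀ i < k, y i = a := fun i hi => (hxy i (by omega)).trans (hxk i hi)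
    have hkτ := hτ k (x k)
    rw [← blockCons_shift_eq hxk, ← blockCons_shift_eq hyk, hxy k (by omega),
      recode_blockCons hk, recode_blockCons hk]
    unfold blockCons
    split_ifs
    · rfl
    · rfl
    · exact ih _ (by omega) (PiNat.mem_cylinder_iff.mpr fun i hi => hxy _ (by omega))

theorem continuous_recode [TopologicalSpace A] [DiscreteTopology A] [TopologicalSpace B]
    (hτ : ∀ k b, k ≤ (τ k b).1) : Continuous (recode a a' τ) := by
  refine continuous_pi fun n => IsLocallyConstant.continuous ?_
  refine (IsLocallyConstant.iff_eventually_eq _).mpr fun x => ?_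
  filter_upwards [(PiNat.isOpen_cylinder _ x (n + 1)).mem_nhds (PiNat.self_mem_cylinder x (n + 1))]
    with y hy
  exact recode_apply_eq_of_mem_cylinder hτ hy

end BlockCode

open BlockCode

noncomputable def baireToCantor : (ℕ → ℕ) → ℕ → Bool :=
  recode 0 true fun k b => (Nat.pair k (b - 1), false)

theorem continuous_baireToCantor : Continuous baireToCantor :=
  continuous_recode fun k b => Nat.left_le_pair k (b - 1)

theorem bijective_baireToCantor : Bijective baireToCantor := by
  let σ : ℕ → Bool → ℕ × ℕ := fun N _ => ((Nat.unpair N).1, (Nat.unpair N).2 + 1)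
  refine ⟨(recode_leftInverse (σ := σ) fun k b hb => ?_).injective,
    (recode_leftInverse (τ := σ) fun N b hb => ?_).surjective⟩
  · simp only [σ, Nat.unpair_pair]
    exact ⟨Bool.false_ne_true, by congr; omega⟩
  · simp only [σ, Nat.add_sub_cancel, Nat.pair_unpair]
    exact ⟨Nat.succ_ne_zero _, by simpa using hb⟩

theorem stmt_7 (Y : Type*) [TopologicalSpace Y] (h : UU (ℕ → Bool) Y) :
    UU (ℕ → ℕ) Y :=
  h.of_continuous_bijective continuous_baireToCantor bijective_baireToCantor
end

section
/- Suppose X is a nonempty zero-dimensional Polish space without isolated points (i.e., X is totally separated/has a basis of clopen sets and is perfect). Then there exists a continuous bijection from Baire space ω^ω onto X. -/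
open Set Filter Topology Function PiNat TopologicalSpace ENNReal

theorem PiNat.exists_forall_res {β : Type*} {P : List β → Prop} (h₀ : P [])
    (hstep : ∀ l, P l → ∃ a, P (a :: l)) : ∃ x : ℕ → β, ∀ n, P (res x n) := by
  choose next hnext using hstep
  let path : ℕ → {l // P l} := fun n => Nat.rec ⟨[], h₀⟩ (fun _ l => ⟨_, hnext l.1 l.2⟩) n
  refine ⟨fun n => next (path n).1 (path n).2, fun n => ?_⟩
  suffices res (fun n => next (path n).1 (path n).2) n = (path n).1 from this ▸ (path n).2
  induction n with
  | zero => rfl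
  | succ n ih => rw [res_succ, ih]

theorem CantorScheme.VanishingDiam.eq_of_forall_mem {β α : Type*} [MetricSpace α]
    {A : List β → Set α} (hA : CantorScheme.VanishingDiam A) {x : ℕ → β} {y z : α}
    (hy : ∀ n, y ∈ A (res x n)) (hz : ∀ n, z ∈ A (res x n)) : y = z :=
  edist_le_zero.1 <| ge_of_tendsto' (hA x) fun n => Metric.edist_le_ediam_of_mem (hy n) (hz n)

def AdmitsFinePartitions {X : Type*} [PseudoEMetricSpace X] (p : Set X → Prop) : Prop :=
  ∀ A, p A → ∀ ε > 0, ∃ B : ℕ → Set X,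
    (∀ n, p (B n) ∧ Metric.ediam (B n) ≤ ε) ∧ Pairwise (Disjoint on B) ∧ ⋃ n, B n = A

section LusinScheme

variable {X : Type*} [PseudoEMetricSpace X] {p : Set X → Prop}
  (hsplit : AdmitsFinePartitions p) (huniv : p univ)

noncomputable def lusinScheme : List ℕ → Subtype p
  | [] => ⟨univ, huniv⟩
  | a :: l =>
    have h := hsplit _ (lusinScheme l).2 _ (ENNReal.inv_pos.2 (natCast_ne_top l.length))
    ⟨h.choose a, (h.choose_spec.1 a).1⟩

theorem lusinScheme_cons (l : List ℕ) :
    (∀ a, Metric.ediam (lusinScheme hsplit huniv (a :: l)).1 ≤ (l.length : ℝ≥0∞)⁻¹) ∧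
    Pairwise (Disjoint on fun a => (lusinScheme hsplit huniv (a :: l)).1) ∧
    ⋃ a, (lusinScheme hsplit huniv (a :: l)).1 = (lusinScheme hsplit huniv l).1 := by
  have h := (hsplit _ (lusinScheme hsplit huniv l).2 _
    (ENNReal.inv_pos.2 (natCast_ne_top l.length))).choose_spec
  exact ⟨fun a => (h.1 a).2, h.2⟩

end LusinScheme

theorem exists_nat_nat_continuous_bijective_of_admitsFinePartitions {X : Type*}
    [MetricSpace X] [CompleteSpace X] {p : Set X → Prop} (hsplit : AdmitsFinePartitions p)
    (huniv : p univ) (hclosed : ∀ A, p A → IsClosed A) (hne : ∀ A, p A → A.Nonempty) :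
    ∃ f : (ℕ → ℕ) → X, Continuous f ∧ Bijective f := by
  set A : List ℕ → Set X := fun l => (lusinScheme hsplit huniv l).1
  have hunion (l : List ℕ) : ⋃ a, A (a :: l) = A l := (lusinScheme_cons hsplit huniv l).2.2
  have hanti : CantorScheme.Antitone A := fun l a =>
    hunion l ▸ subset_iUnion (fun b => A (b :: l)) a
  have hvanish : CantorScheme.VanishingDiam A := by
    intro x
    rw [← tendsto_add_atTop_iff_nat 1]
    refine tendsto_of_tendsto_of_tendsto_of_le_of_le tendsto_const_nhds
      ENNReal.tendsto_inv_nat_nhds_zero (fun _ => zero_le) fun n => ?_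
    simpa [res_length] using (lusinScheme_cons hsplit huniv (res x n)).1 (x n)
  have hdom : (CantorScheme.inducedMap A).1 = univ :=
    (hanti.closureAntitone fun l => hclosed _ (lusinScheme hsplit huniv l).2).map_of_vanishingDiam
      hvanish fun l => hne _ (lusinScheme hsplit huniv l).2
  let f : (ℕ → ℕ) → X := fun x => (CantorScheme.inducedMap A).2 ⟨x, hdom ▸ mem_univ x⟩
  refine ⟨f, hvanish.map_continuous.comp (continuous_id.subtype_mk _), ?_, fun y => ?_⟩
  · exact (CantorScheme.Disjoint.map_injective fun l => (lusinScheme_cons hsplit huniv l).2.1).comp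
      fun x y h => congrArg Subtype.val h
  · obtain ⟨x, hx⟩ := exists_forall_res (P := fun l => y ∈ A l) (mem_univ y) fun l hl => by
      rwa [← hunion l, mem_iUnion] at hl
    exact ⟨x, hvanish.eq_of_forall_mem (CantorScheme.map_mem _) hx⟩

theorem Metric.ediam_le_of_subset_eball_half {X : Type*} [PseudoEMetricSpace X] {s : Set X}
    {x : X} {ε : ℝ≥0∞} (h : s ⊆ eball x (ε / 2)) : ediam s ≤ ε :=
  (ediam_mono h).trans (ediam_eball_le.trans_eq (ENNReal.mul_div_cancel two_ne_zero ofNat_ne_top))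

theorem IsOpen.exists_countable_clopen_partition {X : Type*} [PseudoEMetricSpace X]
    [SecondCountableTopology X] (hbasis : IsTopologicalBasis {s : Set X | IsClopen s})
    {U : Set X} (hU : IsOpen U) {ε : ℝ≥0∞} (hε : 0 < ε) :
    ∃ 𝒟 : Set (Set X), 𝒟.Countable ∧ 𝒟.PairwiseDisjoint id ∧ ⋃₀ 𝒟 = U ∧
      ∀ D ∈ 𝒟, IsClopen D ∧ D.Nonempty ∧ Metric.ediam D ≤ ε := by
  let 𝒱 : Set (Set X) := {V | IsClopen V ∧ V ⊆ U ∧ Metric.ediam V ≤ ε}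
  have h𝒱 : ⋃₀ 𝒱 = U := by
    refine Subset.antisymm (sUnion_subset fun V hV => hV.2.1) fun x hx => ?_
    obtain ⟨V, hV, hxV, hVsub⟩ := hbasis.mem_nhds_iff.1
      (inter_mem (hU.mem_nhds hx) (Metric.eball_mem_nhds x (ENNReal.half_pos hε.ne')))
    exact ⟨V, ⟨hV, hVsub.trans inter_subset_left,
      Metric.ediam_le_of_subset_eball_half (hVsub.trans inter_subset_right)⟩, hxV⟩
  obtain ⟨𝒯, h𝒯c, h𝒯𝒱, h𝒯U⟩ := isOpen_sUnion_countable 𝒱 fun V hV => hV.1.isOpen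
  -- adding `∅` makes the family nonempty, so that it can be enumerated by `ℕ`
  obtain ⟨W, hW⟩ := (h𝒯c.insert ∅).exists_eq_range (insert_nonempty _ _)
  have hW𝒱 (n : ℕ) : W n ∈ 𝒱 := by
    rcases (hW ▸ mem_range_self n : W n ∈ insert ∅ 𝒯) with h | h
    · exact h ▸ ⟨isClopen_empty, empty_subset U, Metric.ediam_empty.trans_le zero_le⟩
    · exact h𝒯𝒱 h
  refine ⟨range (disjointed W) \ {∅}, (countable_range _).mono sdiff_subset, ?_, ?_, ?_⟩
  · rintro _ ⟨⟨i, rfl⟩, -⟩ _ ⟨⟨j, rfl⟩, -⟩ hij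
    exact disjoint_disjointed W (ne_of_apply_ne _ hij)
  · rw [sUnion_sdiff_singleton_empty, sUnion_range, iUnion_disjointed, ← sUnion_range, ← hW,
      sUnion_insert, empty_union, h𝒯U, h𝒱]
  · rintro _ ⟨⟨n, rfl⟩, hne⟩
    refine ⟨?_, nonempty_iff_ne_empty.2 hne,
      (Metric.ediam_mono (disjointed_subset W n)).trans (hW𝒱 n).2.2⟩
    rw [disjointed_eq_inter_compl]
    exact (hW𝒱 n).1.inter ((finite_lt_nat n).isClopen_biInter fun j _ => (hW𝒱 j).1.compl)

theorem exists_infinite_clopen_partition_biUnion {X ι : Type*} [PseudoEMetricSpace X]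
    [SecondCountableTopology X] [Countable ι]
    (hbasis : IsTopologicalBasis {s : Set X | IsClopen s}) {C : ι → Set X}
    (hC : ∀ i, IsClopen (C i)) (hCne : ∀ i, (C i).Nonempty) (hCdisj : Pairwise (Disjoint on C))
    {s : Set ι} (hs : s.Infinite) {ε : ℝ≥0∞} (hε : 0 < ε) :
    ∃ 𝒮 : Set (Set X), 𝒮.Countable ∧ 𝒮.Infinite ∧ 𝒮.PairwiseDisjoint id ∧
      ⋃₀ 𝒮 = ⋃ i ∈ s, C i ∧ ∀ D ∈ 𝒮, IsClopen D ∧ D.Nonempty ∧ Metric.ediam D ≤ ε := by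
  choose 𝒟 h𝒟c h𝒟d h𝒟U h𝒟 using fun i =>
    (hC i).isOpen.exists_countable_clopen_partition hbasis hε
  have h𝒟C (i : ι) {D : Set X} (hD : D ∈ 𝒟 i) : D ⊆ C i := h𝒟U i ▸ subset_sUnion_of_mem hD
  choose pick hpick using fun i => nonempty_sUnion.1 ((h𝒟U i).symm ▸ hCne i)
  refine ⟨⋃ i ∈ s, 𝒟 i, countable_iUnion fun i => countable_iUnion fun _ => h𝒟c i, ?_,
    PairwiseDisjoint.biUnion (fun i _ j _ hij => ?_) fun i _ => h𝒟d i, ?_,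
    fun D hD => ?_⟩
  · refine infinite_of_injOn_mapsTo (f := pick) (fun i _ j _ hij => ?_)
      (fun i hi => mem_biUnion hi (hpick i).1) hs
    by_contra hne
    have hd := (hCdisj hne).mono (h𝒟C _ (hpick i).1) (h𝒟C _ (hpick j).1)
    rw [hij, disjoint_self] at hd
    exact (hpick j).2.ne_empty hd
  · have h := hCdisj hij
    rwa [onFun, ← h𝒟U, ← h𝒟U, sUnion_eq_biUnion, sUnion_eq_biUnion] at h
  · simp only [sUnion_iUnion, h𝒟U]
  · obtain ⟨i, -, hD⟩ := mem_iUnion₂.1 hD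
    exact h𝒟 i D hD

theorem Set.Countable.exists_seq_pairwise_disjoint_iUnion_eq {X : Type*} {𝒟 : Set (Set X)}
    (hc : 𝒟.Countable) (hi : 𝒟.Infinite) (hd : 𝒟.PairwiseDisjoint id) :
    ∃ B : ℕ → Set X, (∀ n, B n ∈ 𝒟) ∧ Pairwise (Disjoint on B) ∧ ⋃ n, B n = ⋃₀ 𝒟 := by
  have := hc.to_subtype
  have := hi.to_subtype
  obtain ⟨e⟩ : Nonempty (ℕ ≃ 𝒟) := nonempty_equiv_of_countable
  refine ⟨fun n => e n, fun n => (e n).2, fun i j hij => hd (e i).2 (e j).2 fun h =>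
    hij (e.injective (Subtype.ext h)), ?_⟩
  rw [sUnion_eq_iUnion]
  exact e.surjective.iUnion_comp fun D : 𝒟 => (D : Set X)

section ClopenFan

variable {X : Type*} [TopologicalSpace X]

def IsClopenFan (A : Set X) : Prop :=
  ∃ (x : X) (C : ℕ → Set X), (∀ n, IsClopen (C n)) ∧ (∀ n, (C n).Nonempty) ∧
    Pairwise (Disjoint on C) ∧ (∀ n, x ∉ C n) ∧ Tendsto C atTop (𝓝 x).smallSets ∧
    A = insert x (⋃ n, C n)

theorem IsClopenFan.nonempty {A : Set X} (hA : IsClopenFan A) : A.Nonempty := by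
  obtain ⟨x, C, -, -, -, -, -, rfl⟩ := hA
  exact insert_nonempty x _

theorem IsClopenFan.isClosed [T2Space X] {A : Set X} (hA : IsClopenFan A) : IsClosed A := by
  obtain ⟨x, C, hC, -, -, -, hlim, rfl⟩ := hA
  refine isOpen_compl_iff.1 (isOpen_iff_mem_nhds.2 fun y hy => ?_)
  simp only [mem_compl_iff, mem_insert_iff, mem_iUnion, not_or, not_exists] at hy
  obtain ⟨U, V, hU, hV, hxU, hyV, hUV⟩ := t2_separation (Ne.symm hy.1)
  obtain ⟨N, hN⟩ := eventually_atTop.1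
    (hlim.eventually (eventually_smallSets_subset.2 (hU.mem_nhds hxU)))
  filter_upwards [hV.mem_nhds hyV, (Finset.range N).iInter_mem_sets.2 fun n _ =>
    (hC n).isClosed.isOpen_compl.mem_nhds (hy.2 n)] with z hzV hzC
  simp only [mem_compl_iff, mem_insert_iff, mem_iUnion, not_or, not_exists]
  refine ⟨fun hzx => disjoint_left.1 hUV (hzx ▸ hxU) hzV, fun n hzn => ?_⟩
  rcases lt_or_ge n N with hn | hn
  · exact mem_iInter₂.1 hzC n (Finset.mem_range.2 hn) hzn
  · exact disjoint_left.1 hUV (hN n hn hzn) hzV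

theorem exists_isClopen_subset_diff_nonempty
    (hbasis : IsTopologicalBasis {s : Set X | IsClopen s})
    (hperf : ∀ x : X, ¬ IsOpen ({x} : Set X)) [T1Space X] {x : X} {D U : Set X} (hD : IsOpen D)
    (hxD : x ∈ D) (hU : U ∈ 𝓝 x) :
    ∃ D' : Set X, IsClopen D' ∧ x ∈ D' ∧ D' ⊆ D ∩ U ∧ (D \ D').Nonempty := by
  obtain ⟨y, hyD, hyx⟩ : ∃ y ∈ D, y ≠ x := by
    by_contra! h
    exact hperf x (eq_singleton_iff_unique_mem.2 ⟨hxD, h⟩ ▸ hD)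
  obtain ⟨D', hD', hxD', hD'sub⟩ := hbasis.mem_nhds_iff.1
    (inter_mem (inter_mem (hD.mem_nhds hxD) hU) (compl_singleton_mem_nhds hyx.symm))
  exact ⟨D', hD', hxD', fun z hz => (hD'sub hz).1, y, hyD, fun hy => (hD'sub hy).2 rfl⟩

theorem IsClopen.isClopenFan (hbasis : IsTopologicalBasis {s : Set X | IsClopen s})
    (hperf : ∀ x : X, ¬ IsOpen ({x} : Set X)) [T1Space X] [FirstCountableTopology X] {A : Set X}
    (hA : IsClopen A) (hne : A.Nonempty) : IsClopenFan A := by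
  obtain ⟨x, hxA⟩ := hne
  obtain ⟨u, hu⟩ := (𝓝 x).exists_antitone_basis
  choose! shrink hshrink using fun (n : ℕ) (D : Set X) (hD : IsClopen D ∧ x ∈ D) =>
    exists_isClopen_subset_diff_nonempty hbasis hperf hD.1.isOpen hD.2 (hu.mem n)
  let D : ℕ → Set X := fun n => Nat.rec A shrink n
  have hD (n : ℕ) : IsClopen (D n) ∧ x ∈ D n := by
    induction n with
    | zero => exact ⟨hA, hxA⟩
    | succ n ih => exact ⟨(hshrink n _ ih).1, (hshrink n _ ih).2.1⟩
  have hDsucc (n : ℕ) : D (n + 1) ⊆ D n ∩ u n := (hshrink n _ (hD n)).2.2.1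
  have hDanti : Antitone D := antitone_nat_of_succ_le fun n => (hDsucc n).trans inter_subset_left
  refine ⟨x, fun n => D n \ D (n + 1), fun n => (hD n).1.diff (hD (n + 1)).1,
    fun n => (hshrink n _ (hD n)).2.2.2, ?_, fun n hx => hx.2 (hD (n + 1)).2, ?_, ?_⟩
  · exact (pairwise_disjoint_on _).2 fun m n hmn =>
      disjoint_left.2 fun z hzm hzn => hzm.2 (hDanti hmn hzn.1)
  · refine (tendsto_add_atTop_iff_nat 1).1 (hu.tendsto_smallSets.smallSets_mono ?_)
    exact Eventually.of_forall fun n => sdiff_subset.trans ((hDsucc n).trans inter_subset_right)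
  · refine Subset.antisymm (fun z hz => ?_) (insert_subset hxA (iUnion_subset fun n =>
      sdiff_subset.trans (hDanti (Nat.zero_le n))))
    rcases eq_or_ne z x with rfl | hzx
    · exact mem_insert z _
    obtain ⟨n, hn⟩ := hu.mem_iff.1 (compl_singleton_mem_nhds hzx.symm)
    refine mem_insert_of_mem x (mem_iUnion.2 ?_)
    by_contra! hstay
    have hzD (k : ℕ) : z ∈ D k := by
      induction k with
      | zero => exact hz
      | succ k ih => exact not_not.1 fun h => hstay k ⟨ih, h⟩
    exact hn (hDsucc n (hzD (n + 1))).2 rfl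

end ClopenFan

theorem admitsFinePartitions_isClopenFan {X : Type*} [EMetricSpace X]
    [SecondCountableTopology X] (hbasis : IsTopologicalBasis {s : Set X | IsClopen s})
    (hperf : ∀ x : X, ¬ IsOpen ({x} : Set X)) : AdmitsFinePartitions (IsClopenFan (X := X)) := by
  rintro _ ⟨x, C, hC, hCne, hCdisj, hxC, hlim, rfl⟩ ε hε
  obtain ⟨N, hN⟩ := eventually_atTop.1 (hlim.eventually (eventually_smallSets_subset.2
    (Metric.eball_mem_nhds x (ENNReal.half_pos hε.ne'))))
  let φ : ℕ → ℕ := fun k => N + 2 * k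
  have hφ : StrictMono φ := fun a b h => by simp only [φ]; omega
  let T := insert x (⋃ k, C (φ k))
  have hT : IsClopenFan T := ⟨x, C ∘ φ, fun k => hC _, fun k => hCne _,
    hCdisj.comp_of_injective hφ.injective, fun k => hxC _, hlim.comp hφ.tendsto_atTop, rfl⟩
  have hTdiam : Metric.ediam T ≤ ε := Metric.ediam_le_of_subset_eball_half <|
    insert_subset (Metric.mem_eball_self (ENNReal.half_pos hε.ne'))
      (iUnion_subset fun k => hN _ (Nat.le_add_right N _))
  have hrest : ((range φ)ᶜ).Infinite := infinite_of_injective_forall_mem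
    (f := fun k => N + 2 * k + 1) (fun i j h => by simp only at h; omega)
    fun k ⟨j, hj⟩ => by simp only [φ] at hj; omega
  obtain ⟨𝒮, h𝒮c, h𝒮i, h𝒮d, h𝒮U, h𝒮⟩ :=
    exists_infinite_clopen_partition_biUnion hbasis hC hCne hCdisj hrest hε
  have hT𝒮 : Disjoint T (⋃₀ 𝒮) := by
    rw [h𝒮U, disjoint_insert_left]
    refine ⟨by simpa using fun n _ => hxC n, disjoint_iUnion_left.2 fun k => ?_⟩
    exact disjoint_iUnion₂_right.2 fun n hn => hCdisj fun h => hn ⟨k, h⟩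
  obtain ⟨B, hB, hBdisj, hBU⟩ := (h𝒮c.insert T).exists_seq_pairwise_disjoint_iUnion_eq
    (h𝒮i.mono (subset_insert T 𝒮))
    (h𝒮d.insert fun D hD _ => hT𝒮.mono_right (subset_sUnion_of_mem hD))
  refine ⟨B, fun n => ?_, hBdisj, hBU.trans ?_⟩
  · rcases hB n with h | h
    · exact h ▸ ⟨hT, hTdiam⟩
    · exact ⟨(h𝒮 _ h).1.isClopenFan hbasis hperf (h𝒮 _ h).2.1, (h𝒮 _ h).2.2⟩
  · rw [sUnion_insert, h𝒮U, insert_union, ← biUnion_range, ← biUnion_union, union_compl_self,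
      biUnion_univ]

theorem stmt_8 (X : Type*) [TopologicalSpace X] [PolishSpace X] [Nonempty X]
    (hbasis : TopologicalSpace.IsTopologicalBasis {s : Set X | IsClopen s})
    (hperf : ∀ x : X, ¬ IsOpen ({x} : Set X)) :
    ∃ f : (ℕ → ℕ) → X, Continuous f ∧ Function.Bijective f := by
  let := upgradeIsCompletelyMetrizable X
  exact exists_nat_nat_continuous_bijective_of_admitsFinePartitions
    (admitsFinePartitions_isClopenFan hbasis hperf)
    (isClopen_univ.isClopenFan hbasis hperf univ_nonempty)
    (fun _ hA => hA.isClosed) (fun _ hA => hA.nonempty)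
end

section
/- If Y is a Polish space that is not compact, then the pair (ω^ω, Y) satisfies UU. -/
/-!
Fix a complete metric on `Y`, a dense sequence, and (this is where non-compactness enters) an
`ε`-separated sequence of points. An open set `W` is read along a tree of cells: a cell records
an open set `inner ⊆ W` and finitely many basic balls known not to lie in `W`. At level `n`, `W`
chooses the least still-free separated ball not inside `W`, and for the `n`-th basic ball, for
that separated ball and for every recorded ball, the least small basic ball refining it that is
not inside `W`. Every ball skipped by these minimal choices lies in `W` and is added to `inner`,
so the choices are recovered from any open set admitted by the child, in particular from the
union of the `inner` sets along a branch: that union stays admitted because each recorded ball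
starts a nested sequence of balls whose limit point no `inner` can contain. The free separated
balls make every cell have countably infinitely many children, which are numbered by `ℕ`; a
point of `ℕ → ℕ` is thus a branch, and `x ↦ ⋃ₙ inner` is the required bijection.
-/

open Metric Set Filter Topology

lemma exists_pairwise_le_dist_of_not_totallyBounded {Y : Type*} [PseudoMetricSpace Y]
    (h : ¬ TotallyBounded (univ : Set Y)) :
    ∃ ε > 0, ∃ z : ℕ → Y, Pairwise fun i j => ε ≤ dist (z i) (z j) := by
  obtain ⟨ε, hε, hcover⟩ : ∃ ε > 0, ∀ t : Set Y, t.Finite → ¬ univ ⊆ ⋃ y ∈ t, ball y ε := by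
    simpa [Metric.totallyBounded_iff] using h
  have : Std.Symm fun x y : Y => ε ≤ dist x y := ⟨fun x y h => by rwa [dist_comm]⟩
  obtain ⟨z, -, hz⟩ := exists_seq_of_forall_finset_exists' (fun _ => True)
    (fun x y : Y => ε ≤ dist x y) fun s _ => by
      obtain ⟨y, -, hy⟩ := not_subset.1 (hcover s s.finite_toSet)
      exact ⟨y, trivial, fun x hx => not_lt.1 fun hlt => hy (mem_biUnion hx (mem_ball'.2 hlt))⟩
  exact ⟨ε, hε, z, hz⟩

section Separated

variable {ι Y : Type*} [PseudoMetricSpace Y] {ε : ℝ} {z : ι → Y}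

lemma subsingleton_setOf_not_disjoint_ball (hz : Pairwise fun i j => ε ≤ dist (z i) (z j))
    (c : Y) {r : ℝ} (hr : r ≤ ε / 4) :
    {i | ¬ Disjoint (ball c r) (ball (z i) (ε / 4))}.Subsingleton := by
  intro i hi j hj
  by_contra hij
  obtain ⟨y, hyc, hyi⟩ := not_disjoint_iff.1 hi
  obtain ⟨w, hwc, hwj⟩ := not_disjoint_iff.1 hj
  rw [mem_ball] at hyc hyi hwc hwj
  have := hz hij
  linarith [dist_triangle4 (z i) y w (z j), dist_triangle y c w, dist_comm y (z i), dist_comm c w]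

lemma pairwise_disjoint_ball (hε : 0 < ε) (hz : Pairwise fun i j => ε ≤ dist (z i) (z j)) :
    Pairwise fun i j => Disjoint (ball (z i) (ε / 4)) (ball (z j) (ε / 4)) := by
  intro i j hij
  by_contra hdisj
  refine hij (subsingleton_setOf_not_disjoint_ball hz (z i) le_rfl ?_ hdisj)
  exact not_disjoint_iff.2 ⟨z i, mem_ball_self (by positivity), mem_ball_self (by positivity)⟩

end Separated

lemma exists_forall_mem_closedBall_of_nested {Y : Type*} [PseudoMetricSpace Y] [CompleteSpace Y]
    {a : ℕ → Y} {r : ℕ → ℝ} (hr : ∀ j, 0 ≤ r j) (hlim : Tendsto r atTop (𝓝 0))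
    (hsub : ∀ j, closedBall (a (j + 1)) (r (j + 1)) ⊆ closedBall (a j) (r j)) :
    ∃ y, ∀ j, y ∈ closedBall (a j) (r j) := by
  have hanti : Antitone fun j => closedBall (a j) (r j) := antitone_nat_of_succ_le hsub
  obtain ⟨y, hy⟩ := nonempty_iInter_of_nonempty_biInter (fun _ => isClosed_closedBall)
    (fun _ => isBounded_closedBall)
    (fun N => ⟨a N, mem_iInter₂.2 fun j hj => hanti hj (mem_closedBall_self (hr N))⟩)
    (squeeze_zero (fun _ => diam_nonneg) (fun j => diam_closedBall (hr j))
      (by simpa using hlim.const_mul 2))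
  exact ⟨y, mem_iInter.1 hy⟩

lemma mem_zip_map_self {α β : Type*} {l : List α} {f : α → β} {a : α} {b : β} :
    (a, b) ∈ l.zip (l.map f) ↔ a ∈ l ∧ f a = b := by
  have h := List.zip_map' (f := id) (g := f) (l := l)
  rw [List.map_id] at h
  simp [h, eq_comm]

section FirstNotSubset

variable {α : Type*} (p : ℕ → Prop) (S : ℕ → Set α) (W : Set α)

open Classical in
noncomputable def firstNotSubset : Option ℕ :=
  if h : ∃ n, p n ∧ ¬ S n ⊆ W then some (Nat.find h) else none

/-- `o = none` imposes no bound. -/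
def below (o : Option ℕ) : Set ℕ := {k | p k ∧ ∀ n ∈ o, k < n}

variable {p S W}

lemma firstNotSubset_eq_iff {o : Option ℕ} :
    firstNotSubset p S W = o ↔ (∀ k ∈ below p o, S k ⊆ W) ∧ ∀ n ∈ o, p n ∧ ¬ S n ⊆ W := by
  classical
  unfold firstNotSubset below
  split_ifs with h
  · cases o with
    | none =>
      simp only [reduceCtorEq, false_iff, not_and, not_forall]
      obtain ⟨n, hn, hS⟩ := h
      exact fun hall => absurd (hall n ⟨hn, by simp⟩) hS
    | some m =>
      simp only [Option.some.injEq, Nat.find_eq_iff, Option.mem_def, forall_eq', mem_ofPred_eq]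
      constructor
      · rintro ⟨hm, hlt⟩
        exact ⟨fun k ⟨hk, hkm⟩ => not_not.1 fun hS => hlt k hkm ⟨hk, hS⟩, hm⟩
      · rintro ⟨hlt, hm⟩
        exact ⟨hm, fun k hkm ⟨hk, hS⟩ => hS (hlt k ⟨hk, hkm⟩)⟩
  · push Not at h
    cases o with
    | none => simpa using fun k hk => h k hk
    | some m => simpa using fun _ => h m

lemma firstNotSubset_spec :
    (∀ k ∈ below p (firstNotSubset p S W), S k ⊆ W) ∧
      ∀ n ∈ firstNotSubset p S W, p n ∧ ¬ S n ⊆ W :=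
  firstNotSubset_eq_iff.1 rfl

end FirstNotSubset

structure UUSetup (Y : Type*) [PseudoMetricSpace Y] where
  dense : ℕ → Y
  denseRange : DenseRange dense
  ε : ℝ
  ε_pos : 0 < ε
  /-- `sep (n, t)` is only used by cells of level `n`. -/
  sep : ℕ × ℕ → Y
  le_dist_sep : Pairwise fun a b => ε ≤ dist (sep a) (sep b)

namespace UUSetup

variable {Y : Type*} [PseudoMetricSpace Y] (C : UUSetup Y)

noncomputable def rad (i : ℕ) : ℝ := C.ε / 4 * (1 / 2) ^ i

lemma rad_pos (i : ℕ) : 0 < C.rad i := mul_pos (by linarith [C.ε_pos]) (by positivity)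

lemma rad_le (i : ℕ) : C.rad i ≤ C.ε / 4 :=
  mul_le_of_le_one_right (by linarith [C.ε_pos]) (pow_le_one₀ (by norm_num) (by norm_num))

lemma rad_antitone : Antitone C.rad := fun _ _ hij =>
  mul_le_mul_of_nonneg_left (pow_le_pow_of_le_one (by norm_num) (by norm_num) hij)
    (by linarith [C.ε_pos])

lemma tendsto_rad : Tendsto C.rad atTop (𝓝 0) := by
  have h := (tendsto_pow_atTop_nhds_zero_of_lt_one (by norm_num : (0 : ℝ) ≤ 1 / 2)
    (by norm_num)).const_mul (C.ε / 4)
  rwa [mul_zero] at h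

noncomputable def center (m : ℕ) : Y := C.dense m.unpair.1

noncomputable def radius (m : ℕ) : ℝ := C.rad m.unpair.2

def basicBall (m : ℕ) : Set Y := ball (C.center m) (C.radius m)

def sepBall (a : ℕ × ℕ) : Set Y := ball (C.sep a) (C.ε / 4)

lemma isOpen_basicBall (m : ℕ) : IsOpen (C.basicBall m) := isOpen_ball

lemma isOpen_sepBall (a : ℕ × ℕ) : IsOpen (C.sepBall a) := isOpen_ball

lemma sep_mem_sepBall (a : ℕ × ℕ) : C.sep a ∈ C.sepBall a :=
  mem_ball_self (by linarith [C.ε_pos])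

lemma disjoint_sepBall {a b : ℕ × ℕ} (hab : a ≠ b) : Disjoint (C.sepBall a) (C.sepBall b) :=
  pairwise_disjoint_ball C.ε_pos C.le_dist_sep hab

lemma subsingleton_not_disjoint_basicBall_sepBall (m L : ℕ) :
    {t | ¬ Disjoint (C.basicBall m) (C.sepBall (L, t))}.Subsingleton := fun _ hs _ ht =>
  (Prod.mk.inj (subsingleton_setOf_not_disjoint_ball C.le_dist_sep _ (C.rad_le _) hs ht)).2

def Refines (lev m : ℕ) (T : Y × ℝ) : Prop :=
  dist (C.center m) T.1 + C.radius m < T.2 ∧ C.radius m ≤ C.rad lev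

lemma closedBall_subset_of_refines {lev m : ℕ} {T : Y × ℝ} (h : C.Refines lev m T) :
    closedBall (C.center m) (C.radius m) ⊆ ball T.1 T.2 := fun y hy => by
  rw [mem_closedBall] at hy
  rw [mem_ball]
  linarith [dist_triangle y (C.center m) T.1, h.1]

lemma basicBall_subset_of_refines {lev m : ℕ} {T : Y × ℝ} (h : C.Refines lev m T) :
    C.basicBall m ⊆ ball T.1 T.2 :=
  ball_subset_closedBall.trans (C.closedBall_subset_of_refines h)

lemma exists_refines_mem {T : Y × ℝ} {y : Y} (hy : y ∈ ball T.1 T.2) (lev : ℕ) :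
    ∃ m, C.Refines lev m T ∧ y ∈ C.basicBall m := by
  rw [mem_ball] at hy
  have hδ : 0 < min (C.rad lev) ((T.2 - dist y T.1) / 3) :=
    lt_min (C.rad_pos lev) (by linarith)
  obtain ⟨i, hi⟩ := (C.tendsto_rad.eventually (gt_mem_nhds hδ)).exists
  obtain ⟨j, hj⟩ := C.denseRange.exists_dist_lt y (C.rad_pos i)
  have hi₁ := hi.trans_le (min_le_left _ _)
  have hi₂ := hi.trans_le (min_le_right _ _)
  refine ⟨Nat.pair j i, ⟨?_, ?_⟩, ?_⟩ <;>
    simp only [center, radius, basicBall, Nat.unpair_pair, mem_ball]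
  · linarith [dist_triangle (C.dense j) y T.1, dist_comm y (C.dense j)]
  · exact hi₁.le
  · exact hj

lemma exists_mem_basicBall_subset {W : Set Y} (hW : IsOpen W) {y : Y} (hy : y ∈ W) :
    ∃ m, y ∈ C.basicBall m ∧ C.basicBall m ⊆ W := by
  obtain ⟨R, hR, hball⟩ := Metric.isOpen_iff.1 hW y hy
  obtain ⟨m, hm, hym⟩ := C.exists_refines_mem (T := (y, R)) (mem_ball_self hR) 0
  exact ⟨m, hym, (C.basicBall_subset_of_refines hm).trans hball⟩

noncomputable def refine (lev : ℕ) (W : Set Y) (T : Y × ℝ) : Option ℕ :=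
  firstNotSubset (C.Refines lev · T) C.basicBall W

def covered (lev : ℕ) (T : Y × ℝ) (o : Option ℕ) : Set Y :=
  ⋃ m ∈ below (C.Refines lev · T) o, C.basicBall m

lemma isOpen_covered (lev : ℕ) (T : Y × ℝ) (o : Option ℕ) : IsOpen (C.covered lev T o) :=
  isOpen_biUnion fun m _ => C.isOpen_basicBall m

lemma covered_subset_ball (lev : ℕ) (T : Y × ℝ) (o : Option ℕ) :
    C.covered lev T o ⊆ ball T.1 T.2 :=
  iUnion₂_subset fun _ hm => C.basicBall_subset_of_refines hm.1

lemma covered_none (lev : ℕ) (T : Y × ℝ) : C.covered lev T none = ball T.1 T.2 := by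
  refine (C.covered_subset_ball lev T none).antisymm fun y hy => ?_
  obtain ⟨m, hm, hym⟩ := C.exists_refines_mem hy lev
  exact mem_biUnion ⟨hm, by simp⟩ hym

lemma refine_eq_iff {lev : ℕ} {W : Set Y} {T : Y × ℝ} {o : Option ℕ} :
    C.refine lev W T = o ↔
      C.covered lev T o ⊆ W ∧ ∀ m ∈ o, C.Refines lev m T ∧ ¬ C.basicBall m ⊆ W := by
  rw [refine, firstNotSubset_eq_iff, covered, iUnion₂_subset_iff]

lemma covered_refine_subset (lev : ℕ) (W : Set Y) (T : Y × ℝ) :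
    C.covered lev T (C.refine lev W T) ⊆ W :=
  (C.refine_eq_iff.1 rfl).1

lemma refine_spec {lev m : ℕ} {W : Set Y} {T : Y × ℝ} (hm : m ∈ C.refine lev W T) :
    C.Refines lev m T ∧ ¬ C.basicBall m ⊆ W :=
  (C.refine_eq_iff.1 rfl).2 m hm

lemma refine_eq_none_iff {lev : ℕ} {W : Set Y} {T : Y × ℝ} :
    C.refine lev W T = none ↔ ball T.1 T.2 ⊆ W := by
  simp [refine_eq_iff, covered_none]

lemma exists_mem_refine {lev : ℕ} {W : Set Y} {T : Y × ℝ} (h : ¬ ball T.1 T.2 ⊆ W) :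
    ∃ m, m ∈ C.refine lev W T :=
  Option.ne_none_iff_exists'.1 (mt C.refine_eq_none_iff.1 h)

structure Cell (Y : Type*) where
  level : ℕ
  inner : Set Y
  escaping : List ℕ

def Admits (A : Cell Y) (W : Set Y) : Prop :=
  IsOpen W ∧ A.inner ⊆ W ∧ ∀ m ∈ A.escaping, ¬ C.basicBall m ⊆ W

def root : Cell Y := ⟨0, ∅, []⟩

lemma admits_root {W : Set Y} (hW : IsOpen W) : C.Admits root W :=
  ⟨hW, empty_subset W, by simp [root]⟩

def fresh (A : Cell Y) : Set ℕ :=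
  {t | Disjoint A.inner (C.sepBall (A.level, t)) ∧
    ∀ m ∈ A.escaping, Disjoint (C.basicBall m) (C.sepBall (A.level, t))}

noncomputable def firstFresh (A : Cell Y) (W : Set Y) : Option ℕ :=
  firstNotSubset (· ∈ C.fresh A) (fun t => C.sepBall (A.level, t)) W

/-- The balls to be refined when passing from `A` to a child. -/
noncomputable def targets (A : Cell Y) (τ : Option ℕ) : List (Y × ℝ) :=
  (C.center A.level, C.radius A.level) ::
    ((τ.map fun t => (C.sep (A.level, t), C.ε / 4)).toList ++
      A.escaping.map fun m => (C.center m, C.radius m))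

/-- The countable codes through which an open set selects a child of a cell. -/
abbrev ChildCode : Type := Option ℕ × List (Option ℕ)

def child (A : Cell Y) (ι : ChildCode) : Cell Y where
  level := A.level + 1
  inner := A.inner ∪ (⋃ t ∈ below (· ∈ C.fresh A) ι.1, C.sepBall (A.level, t)) ∪
    ⋃ T ∈ (C.targets A ι.1).zip ι.2, C.covered (A.level + 1) T.1 T.2
  escaping := ι.2.reduceOption

noncomputable def idx (A : Cell Y) (W : Set Y) : ChildCode :=
  (C.firstFresh A W, (C.targets A (C.firstFresh A W)).map (C.refine (A.level + 1) W))

lemma mem_targets {A : Cell Y} {τ : Option ℕ} {T : Y × ℝ} :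
    T ∈ C.targets A τ ↔ T = (C.center A.level, C.radius A.level) ∨
      (∃ t ∈ τ, T = (C.sep (A.level, t), C.ε / 4)) ∨
      ∃ m ∈ A.escaping, T = (C.center m, C.radius m) := by
  simp [targets, eq_comm]

lemma ball_subset_of_mem_targets {A : Cell Y} {τ : Option ℕ} {T : Y × ℝ}
    (hT : T ∈ C.targets A τ) :
    ball T.1 T.2 ⊆ C.basicBall A.level ∪ (⋃ t, C.sepBall (A.level, t)) ∪
      ⋃ m ∈ A.escaping, C.basicBall m := by
  rcases C.mem_targets.1 hT with rfl | ⟨t, -, rfl⟩ | ⟨m, hm, rfl⟩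
  · exact subset_union_left.trans subset_union_left
  · exact (subset_iUnion (fun t => C.sepBall (A.level, t)) t).trans
      (subset_union_right.trans subset_union_left)
  · exact (subset_biUnion_of_mem (u := C.basicBall) hm).trans subset_union_right

lemma inner_child_idx (A : Cell Y) (W : Set Y) :
    (C.child A (C.idx A W)).inner = A.inner ∪
      (⋃ t ∈ below (· ∈ C.fresh A) (C.firstFresh A W), C.sepBall (A.level, t)) ∪
      ⋃ T ∈ C.targets A (C.firstFresh A W),
        C.covered (A.level + 1) T (C.refine (A.level + 1) W T) := by
  ext y
  simp only [child, idx, mem_union, mem_iUnion, Prod.exists, mem_zip_map_self, exists_prop]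
  grind

lemma mem_escaping_child_idx {A : Cell Y} {W : Set Y} {m : ℕ} :
    m ∈ (C.child A (C.idx A W)).escaping ↔
      ∃ T ∈ C.targets A (C.firstFresh A W), m ∈ C.refine (A.level + 1) W T := by
  simp [child, idx, List.reduceOption_mem_iff, Option.mem_def]

lemma inner_subset_inner_child (A : Cell Y) (ι : ChildCode) :
    A.inner ⊆ (C.child A ι).inner :=
  subset_union_left.trans subset_union_left

lemma inner_child_subset (A : Cell Y) (ι : ChildCode) :
    (C.child A ι).inner ⊆ A.inner ∪ C.basicBall A.level ∪ (⋃ t, C.sepBall (A.level, t)) ∪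
      ⋃ m ∈ A.escaping, C.basicBall m := by
  rintro y ((hy | hy) | hy)
  · exact Or.inl (Or.inl (Or.inl hy))
  · obtain ⟨t, -, hy⟩ := mem_iUnion₂.1 hy
    exact Or.inl (Or.inr (mem_iUnion.2 ⟨t, hy⟩))
  · obtain ⟨T, hT, hy⟩ := mem_iUnion₂.1 hy
    have := C.ball_subset_of_mem_targets (List.of_mem_zip hT).1
      (C.covered_subset_ball _ _ _ hy)
    grind

lemma isOpen_inner_child {A : Cell Y} (hA : IsOpen A.inner) (ι : ChildCode) :
    IsOpen (C.child A ι).inner :=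
  (hA.union (isOpen_biUnion fun _ _ => C.isOpen_sepBall _)).union
    (isOpen_biUnion fun _ _ => C.isOpen_covered _ _ _)

lemma admits_child_idx {A : Cell Y} {W : Set Y} (hW : C.Admits A W) :
    C.Admits (C.child A (C.idx A W)) W := by
  refine ⟨hW.1, ?_, fun m hm => ?_⟩
  · rw [inner_child_idx]
    refine union_subset (union_subset hW.2.1 (iUnion₂_subset firstNotSubset_spec.1))
      (iUnion₂_subset fun T _ => C.covered_refine_subset _ W T)
  · obtain ⟨T, -, hmT⟩ := C.mem_escaping_child_idx.1 hm
    exact (C.refine_spec hmT).2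

lemma basicBall_level_subset_inner_child_idx {A : Cell Y} {W : Set Y}
    (h : C.basicBall A.level ⊆ W) : C.basicBall A.level ⊆ (C.child A (C.idx A W)).inner := by
  have hT : (C.center A.level, C.radius A.level) ∈ C.targets A (C.firstFresh A W) :=
    C.mem_targets.2 (Or.inl rfl)
  rw [inner_child_idx]
  refine fun y hy => Or.inr (mem_iUnion₂.2 ⟨_, hT, ?_⟩)
  rwa [C.refine_eq_none_iff.2 h, covered_none]

/-- The balls skipped by the minimal choices of `W'` lie in the child's `inner`, so they force
the same choices on `W`. -/
lemma idx_eq_of_admits_child {A : Cell Y} {W W' : Set Y}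
    (h : C.Admits (C.child A (C.idx A W')) W) : C.idx A W = C.idx A W' := by
  have hinner := C.inner_child_idx A W' ▸ h.2.1
  have hesc : ∀ T ∈ C.targets A (C.firstFresh A W'), ∀ m ∈ C.refine (A.level + 1) W' T,
      ¬ C.basicBall m ⊆ W := fun T hT m hm =>
    h.2.2 m (C.mem_escaping_child_idx.2 ⟨T, hT, hm⟩)
  have hτ : C.firstFresh A W = C.firstFresh A W' := by
    refine firstNotSubset_eq_iff.2 ⟨fun t ht => ?_, fun t ht => ⟨?_, fun hsub => ?_⟩⟩
    · exact (subset_biUnion_of_mem ht).trans (subset_union_right.trans subset_union_left)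
        |>.trans hinner
    · exact (firstNotSubset_spec.2 t ht).1
    · have hT : (C.sep (A.level, t), C.ε / 4) ∈ C.targets A (C.firstFresh A W') :=
        C.mem_targets.2 (Or.inr (Or.inl ⟨t, ht, rfl⟩))
      obtain ⟨m, hm⟩ := C.exists_mem_refine (lev := A.level + 1)
        (T := (C.sep (A.level, t), C.ε / 4)) (firstNotSubset_spec.2 t ht).2
      exact hesc _ hT m hm ((C.basicBall_subset_of_refines (C.refine_spec hm).1).trans hsub)
  have hrefine : ∀ T ∈ C.targets A (C.firstFresh A W'),
      C.refine (A.level + 1) W T = C.refine (A.level + 1) W' T := fun T hT =>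
    C.refine_eq_iff.2 ⟨(subset_biUnion_of_mem (u := fun T => C.covered (A.level + 1) T
        (C.refine (A.level + 1) W' T)) hT).trans (subset_union_right.trans hinner),
      fun m hm => ⟨(C.refine_spec hm).1, hesc T hT m hm⟩⟩
  simp only [idx, hτ, List.map_congr_left hrefine]

structure Good (A : Cell Y) : Prop where
  isOpen_inner : IsOpen A.inner
  finite_not_disjoint : ∀ L ≥ A.level, {t | ¬ Disjoint A.inner (C.sepBall (L, t))}.Finite
  radius_le : ∀ m ∈ A.escaping, C.radius m ≤ C.rad A.level

lemma good_root : C.Good root :=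
  ⟨isOpen_empty, fun _ _ => by simp [root], by simp [root]⟩

lemma good_child_idx {A : Cell Y} (hA : C.Good A) (W : Set Y) :
    C.Good (C.child A (C.idx A W)) := by
  refine ⟨C.isOpen_inner_child hA.isOpen_inner _, fun L hL => ?_, fun m hm => ?_⟩
  · have hL' : A.level < L := hL
    refine ((hA.finite_not_disjoint L hL'.le).union
      (((C.subsingleton_not_disjoint_basicBall_sepBall A.level L).finite).union
        (A.escaping.finite_toSet.biUnion fun m _ =>
          (C.subsingleton_not_disjoint_basicBall_sepBall m L).finite))).subset ?_
    intro t ht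
    contrapose! ht
    simp only [mem_union, mem_iUnion, mem_ofPred_eq, not_or, not_exists, not_not] at ht
    simp only [mem_ofPred_eq, not_not]
    refine Disjoint.mono_left (C.inner_child_subset A _) ?_
    simp only [disjoint_union_left, disjoint_iUnion_left]
    exact ⟨⟨⟨ht.1, ht.2.1⟩, fun t' => C.disjoint_sepBall (by grind)⟩, fun m hm => ht.2.2 m hm⟩
  · obtain ⟨T, -, hmT⟩ := C.mem_escaping_child_idx.1 hm
    exact (C.refine_spec hmT).1.2

lemma fresh_infinite {A : Cell Y} (hA : C.Good A) : (C.fresh A).Infinite := by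
  refine infinite_of_finite_compl (((hA.finite_not_disjoint A.level le_rfl).union
    (A.escaping.finite_toSet.biUnion fun m _ =>
      (C.subsingleton_not_disjoint_basicBall_sepBall m A.level).finite)).subset ?_)
  intro t ht
  simp only [fresh, mem_compl_iff, mem_ofPred_eq, not_and_or, not_forall] at ht
  rcases ht with ht | ⟨m, hm, ht⟩
  · exact Or.inl ht
  · exact Or.inr (mem_biUnion hm ht)

def padding (A : Cell Y) (t : ℕ) : Set Y :=
  A.inner ∪ ⋃ t' ∈ below (· ∈ C.fresh A) (some t), C.sepBall (A.level, t')

lemma admits_padding {A : Cell Y} (hA : C.Good A) {W : Set Y} (hW : C.Admits A W) (t : ℕ) :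
    C.Admits A (C.padding A t) := by
  refine ⟨hA.isOpen_inner.union (isOpen_biUnion fun _ _ => C.isOpen_sepBall _),
    subset_union_left, fun m hm hsub => ?_⟩
  obtain ⟨y, hy, hyW⟩ := not_subset.1 (hW.2.2 m hm)
  rcases hsub hy with hy' | hy'
  · exact hyW (hW.2.1 hy')
  · obtain ⟨t', ht', hy'⟩ := mem_iUnion₂.1 hy'
    exact disjoint_left.1 (ht'.1.2 m hm) hy hy'

lemma firstFresh_padding {A : Cell Y} {t : ℕ} (ht : t ∈ C.fresh A) :
    C.firstFresh A (C.padding A t) = some t := by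
  refine firstNotSubset_eq_iff.2 ⟨fun t' ht' => ?_, ?_⟩
  · exact (subset_biUnion_of_mem (u := fun t' => C.sepBall (A.level, t')) ht').trans
      subset_union_right
  · rintro _ ⟨⟩
    refine ⟨ht, fun hsub => ?_⟩
    rcases hsub (C.sep_mem_sepBall (A.level, t)) with hy | hy
    · exact disjoint_right.1 ht.1 (C.sep_mem_sepBall _) hy
    · obtain ⟨t', ht', hy⟩ := mem_iUnion₂.1 hy
      have htt' : (A.level, t') ≠ (A.level, t) := by
        simpa using (ht'.2 t rfl).ne
      exact disjoint_left.1 (C.disjoint_sepBall htt') hy (C.sep_mem_sepBall _)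

def kids (A : Cell Y) : Set ChildCode := C.idx A '' {W | C.Admits A W}

lemma kids_infinite {A : Cell Y} (hA : C.Good A) {W : Set Y} (hW : C.Admits A W) :
    (C.kids A).Infinite := by
  refine infinite_of_injOn_mapsTo (f := fun t => C.idx A (C.padding A t)) (fun t ht t' ht' h => ?_)
    (fun t _ => ⟨_, C.admits_padding hA hW t, rfl⟩) (C.fresh_infinite hA)
  simpa [idx, C.firstFresh_padding ht, C.firstFresh_padding ht'] using congrArg Prod.fst h

abbrev LiveCell : Type _ := {A : Cell Y // C.Good A ∧ ∃ W, C.Admits A W}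

def rootLive : C.LiveCell := ⟨root, C.good_root, ∅, C.admits_root isOpen_empty⟩

noncomputable def kidsEquiv (A : C.LiveCell) : ℕ ≃ C.kids A.1 :=
  (Classical.choice (nonempty_denumerable_iff.2 ⟨inferInstance,
    infinite_coe_iff.2 (A.2.2.elim fun _ hW => C.kids_infinite A.2.1 hW)⟩)).eqv.symm

noncomputable def next (A : C.LiveCell) (n : ℕ) : C.LiveCell :=
  ⟨C.child A.1 (C.kidsEquiv A n), by
    obtain ⟨W, hW, h⟩ := (C.kidsEquiv A n).2
    rw [← h]
    exact ⟨C.good_child_idx A.2.1 W, W, C.admits_child_idx hW⟩⟩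

lemma exists_next_eq (A : C.LiveCell) (n : ℕ) :
    ∃ W, C.Admits A.1 W ∧ (C.next A n).1 = C.child A.1 (C.idx A.1 W) := by
  obtain ⟨W, hW, h⟩ := (C.kidsEquiv A n).2
  exact ⟨W, hW, by rw [h]; rfl⟩

lemma not_basicBall_subset_inner (A : C.LiveCell) {m : ℕ} (hm : m ∈ A.1.escaping) :
    ¬ C.basicBall m ⊆ A.1.inner := fun h =>
  A.2.2.elim fun _ hW => hW.2.2 m hm (h.trans hW.2.1)

noncomputable def cellAt (x : ℕ → ℕ) : ℕ → C.LiveCell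
  | 0 => C.rootLive
  | n + 1 => C.next (cellAt x n) (x n)

lemma cellAt_succ (x : ℕ → ℕ) (n : ℕ) :
    (C.cellAt x (n + 1)).1 = C.child (C.cellAt x n).1 (C.kidsEquiv (C.cellAt x n) (x n)) :=
  rfl

lemma level_cellAt (x : ℕ → ℕ) (n : ℕ) : (C.cellAt x n).1.level = n := by
  induction n with
  | zero => rfl
  | succ n ih => exact congrArg (· + 1) ih

lemma cellAt_congr {x x' : ℕ → ℕ} {n : ℕ} (h : ∀ m < n, x m = x' m) :
    C.cellAt x n = C.cellAt x' n := by
  induction n with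
  | zero => rfl
  | succ n ih =>
    change C.next (C.cellAt x n) (x n) = C.next (C.cellAt x' n) (x' n)
    rw [ih fun m hm => h m (by omega), h n (by omega)]

lemma monotone_inner_cellAt (x : ℕ → ℕ) : Monotone fun n => (C.cellAt x n).1.inner :=
  monotone_nat_of_le_succ fun n => C.inner_subset_inner_child (C.cellAt x n).1 _

def branchSet (x : ℕ → ℕ) : Set Y := ⋃ n, (C.cellAt x n).1.inner

lemma isOpen_branchSet (x : ℕ → ℕ) : IsOpen (C.branchSet x) :=
  isOpen_iUnion fun n => (C.cellAt x n).2.1.isOpen_inner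

lemma isOpen_setOf_mem_branchSet : IsOpen {p : (ℕ → ℕ) × Y | p.2 ∈ C.branchSet p.1} := by
  rw [isOpen_iff_mem_nhds]
  rintro ⟨x, y⟩ hy
  obtain ⟨n, hn⟩ := mem_iUnion.1 hy
  have hcyl : IsOpen ((Finset.range n : Set ℕ).pi fun m => {x m}) :=
    isOpen_set_pi (Finset.finite_toSet _) fun _ _ => isOpen_discrete _
  refine mem_of_superset ((hcyl.prod (C.cellAt x n).2.1.isOpen_inner).mem_nhds
    ⟨fun m _ => rfl, hn⟩) ?_
  rintro ⟨x', y'⟩ ⟨hx', hy'⟩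
  refine mem_iUnion.2 ⟨n, ?_⟩
  rwa [C.cellAt_congr fun m hm => hx' m (by simpa using hm)]

lemma exists_refines_mem_escaping_succ (x : ℕ → ℕ) {n m : ℕ}
    (hm : m ∈ (C.cellAt x n).1.escaping) :
    ∃ m' ∈ (C.cellAt x (n + 1)).1.escaping, C.Refines (n + 1) m' (C.center m, C.radius m) := by
  obtain ⟨W, hW, h⟩ := C.exists_next_eq (C.cellAt x n) (x n)
  have hT : (C.center m, C.radius m) ∈
      C.targets (C.cellAt x n).1 (C.firstFresh (C.cellAt x n).1 W) :=
    C.mem_targets.2 (Or.inr (Or.inr ⟨m, hm, rfl⟩))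
  obtain ⟨m', hm'⟩ := C.exists_mem_refine (lev := (C.cellAt x n).1.level + 1)
    (T := (C.center m, C.radius m)) (hW.2.2 m hm)
  refine ⟨m', ?_, by simpa [level_cellAt] using (C.refine_spec hm').1⟩
  change m' ∈ (C.next (C.cellAt x n) (x n)).1.escaping
  rw [h]
  exact C.mem_escaping_child_idx.2 ⟨_, hT, hm'⟩

lemma exists_seq_escaping (x : ℕ → ℕ) {n m : ℕ} (hm : m ∈ (C.cellAt x n).1.escaping) :
    ∃ s : ℕ → ℕ, s 0 = m ∧ ∀ j, s j ∈ (C.cellAt x (n + j)).1.escaping ∧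
      C.Refines (n + j + 1) (s (j + 1)) (C.center (s j), C.radius (s j)) := by
  choose! f hf using fun j m => C.exists_refines_mem_escaping_succ x (n := n + j) (m := m)
  let s : ℕ → ℕ := fun j => Nat.rec m (fun j c => f j c) j
  have hs : ∀ j, s j ∈ (C.cellAt x (n + j)).1.escaping := by
    intro j
    induction j with
    | zero => exact hm
    | succ j ih => exact (hf j _ ih).1
  exact ⟨s, rfl, fun j => ⟨hs j, (hf j _ (hs j)).2⟩⟩

/-- The escaping balls met along the branch shrink to a point that no `inner` can contain,
since arbitrarily late escaping balls around it are not inside the later `inner` sets. -/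
lemma exists_mem_basicBall_not_mem_branchSet [CompleteSpace Y] (x : ℕ → ℕ) {n m : ℕ}
    (hm : m ∈ (C.cellAt x n).1.escaping) : ∃ y ∈ C.basicBall m, y ∉ C.branchSet x := by
  obtain ⟨s, rfl, hs⟩ := C.exists_seq_escaping x hm
  have hrad : ∀ j, C.radius (s j) ≤ C.rad j := fun j => by
    have := (C.cellAt x (n + j)).2.1.radius_le _ (hs j).1
    rw [level_cellAt] at this
    exact this.trans (C.rad_antitone (by omega))
  have hlim : Tendsto (fun j => C.radius (s j)) atTop (𝓝 0) :=
    squeeze_zero (fun j => (C.rad_pos _).le) hrad C.tendsto_rad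
  obtain ⟨y, hy⟩ := exists_forall_mem_closedBall_of_nested (a := fun j => C.center (s j))
    (r := fun j => C.radius (s j))
    (fun j => (C.rad_pos _).le) hlim
    (fun j => (C.closedBall_subset_of_refines (hs j).2).trans ball_subset_closedBall)
  refine ⟨y, C.closedBall_subset_of_refines (hs 0).2 (hy 1), fun hyU => ?_⟩
  obtain ⟨k, hk⟩ := mem_iUnion.1 hyU
  obtain ⟨η, hη, hball⟩ := Metric.isOpen_iff.1 (C.cellAt x k).2.1.isOpen_inner y hk
  obtain ⟨j, hjη, hjk⟩ :=
    ((hlim.eventually (gt_mem_nhds (half_pos hη))).and (eventually_ge_atTop k)).exists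
  refine C.not_basicBall_subset_inner _ (hs j).1 fun w hw => ?_
  refine C.monotone_inner_cellAt x (show k ≤ n + j by omega) (hball ?_)
  have hyj := mem_closedBall.1 (hy j)
  rw [basicBall, mem_ball] at hw
  rw [mem_ball]
  linarith [dist_triangle w (C.center (s j)) y, dist_comm y (C.center (s j))]

lemma admits_branchSet [CompleteSpace Y] (x : ℕ → ℕ) (n : ℕ) :
    C.Admits (C.cellAt x n).1 (C.branchSet x) :=
  ⟨C.isOpen_branchSet x, subset_iUnion (fun n => (C.cellAt x n).1.inner) n, fun _ hm hsub =>
    let ⟨_, hy, hyU⟩ := C.exists_mem_basicBall_not_mem_branchSet x hm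
    hyU (hsub hy)⟩

def IsBranchOf (x : ℕ → ℕ) (W : Set Y) : Prop :=
  ∀ n, (C.kidsEquiv (C.cellAt x n) (x n) : ChildCode) = C.idx (C.cellAt x n).1 W

lemma isBranchOf_branchSet [CompleteSpace Y] (x : ℕ → ℕ) : C.IsBranchOf x (C.branchSet x) := by
  intro n
  obtain ⟨W, -, h⟩ := (C.kidsEquiv (C.cellAt x n) (x n)).2
  have hadm := C.admits_branchSet x (n + 1)
  rw [cellAt_succ, ← h] at hadm
  rw [← h, C.idx_eq_of_admits_child hadm]

section IsBranchOf

variable {C}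

lemma IsBranchOf.eq {x x' : ℕ → ℕ} {W : Set Y} (hx : C.IsBranchOf x W)
    (hx' : C.IsBranchOf x' W) : x = x' := by
  funext n
  induction n using Nat.strong_induction_on with
  | _ n ih =>
    have hcell : C.cellAt x n = C.cellAt x' n := C.cellAt_congr ih
    have h := hx n
    rw [hcell] at h
    exact (C.kidsEquiv _).injective (Subtype.ext (h.trans (hx' n).symm))

lemma IsBranchOf.cellAt_succ {x : ℕ → ℕ} {W : Set Y} (hx : C.IsBranchOf x W) (n : ℕ) :
    (C.cellAt x (n + 1)).1 = C.child (C.cellAt x n).1 (C.idx (C.cellAt x n).1 W) := by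
  rw [UUSetup.cellAt_succ, hx n]

lemma IsBranchOf.admits {x : ℕ → ℕ} {W : Set Y} (hx : C.IsBranchOf x W) (hW : IsOpen W)
    (n : ℕ) : C.Admits (C.cellAt x n).1 W := by
  induction n with
  | zero => exact C.admits_root hW
  | succ n ih => exact hx.cellAt_succ n ▸ C.admits_child_idx ih

lemma IsBranchOf.branchSet_eq {x : ℕ → ℕ} {W : Set Y} (hx : C.IsBranchOf x W)
    (hW : IsOpen W) : C.branchSet x = W := by
  refine (iUnion_subset fun n => (hx.admits hW n).2.1).antisymm fun y hy => ?_
  obtain ⟨k, hyk, hk⟩ := C.exists_mem_basicBall_subset hW hy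
  have hlev := C.level_cellAt x k
  refine mem_iUnion.2 ⟨k + 1, ?_⟩
  rw [hx.cellAt_succ k]
  exact C.basicBall_level_subset_inner_child_idx (by rwa [hlev]) (by rwa [hlev])

end IsBranchOf

noncomputable def childIndex (A : C.LiveCell) {W : Set Y} (hW : C.Admits A.1 W) : ℕ :=
  (C.kidsEquiv A).symm ⟨C.idx A.1 W, W, hW, rfl⟩

lemma kidsEquiv_childIndex (A : C.LiveCell) {W : Set Y} (hW : C.Admits A.1 W) :
    (C.kidsEquiv A (C.childIndex A hW) : ChildCode) = C.idx A.1 W := by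
  simp [childIndex]

noncomputable def canonicalCell {W : Set Y} (hW : IsOpen W) :
    ℕ → {A : C.LiveCell // C.Admits A.1 W}
  | 0 => ⟨C.rootLive, C.admits_root hW⟩
  | n + 1 =>
    let A := canonicalCell hW n
    ⟨C.next A.1 (C.childIndex A.1 A.2), by
      change C.Admits (C.child A.1.1 (C.kidsEquiv A.1 (C.childIndex A.1 A.2))) W
      rw [kidsEquiv_childIndex]
      exact C.admits_child_idx A.2⟩

noncomputable def canonicalBranch {W : Set Y} (hW : IsOpen W) (n : ℕ) : ℕ :=
  C.childIndex _ (C.canonicalCell hW n).2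

lemma cellAt_canonicalBranch {W : Set Y} (hW : IsOpen W) (n : ℕ) :
    C.cellAt (C.canonicalBranch hW) n = (C.canonicalCell hW n).1 := by
  induction n with
  | zero => rfl
  | succ n ih =>
    change C.next (C.cellAt _ n) _ = _
    rw [ih]
    rfl

lemma isBranchOf_canonicalBranch {W : Set Y} (hW : IsOpen W) :
    C.IsBranchOf (C.canonicalBranch hW) W := by
  intro n
  rw [cellAt_canonicalBranch]
  exact C.kidsEquiv_childIndex _ _

end UUSetup

theorem UUSetup.uu {Y : Type*} [PseudoMetricSpace Y] [CompleteSpace Y] (C : UUSetup Y) :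
    UU (ℕ → ℕ) Y := by
  refine ⟨{p | p.2 ∈ C.branchSet p.1}, C.isOpen_setOf_mem_branchSet, fun W hW => ?_⟩
  have hx := C.isBranchOf_canonicalBranch hW
  exact ⟨_, hx.branchSet_eq hW, fun x' (hx' : C.branchSet x' = W) =>
    (hx' ▸ C.isBranchOf_branchSet x').eq hx⟩

theorem stmt_9 (Y : Type*) [TopologicalSpace Y] [PolishSpace Y]
    (h : ¬ CompactSpace Y) : UU (ℕ → ℕ) Y := by
  let := TopologicalSpace.upgradeIsCompletelyMetrizable Y
  obtain ⟨ε, hε, z, hz⟩ := exists_pairwise_le_dist_of_not_totallyBounded fun htb =>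
    h ⟨isCompact_iff_totallyBounded_isComplete.2 ⟨htb, isComplete_univ⟩⟩
  have : Nonempty Y := ⟨z 0⟩
  obtain ⟨q, hq⟩ := TopologicalSpace.exists_dense_seq Y
  exact UUSetup.uu ⟨q, hq, ε, hε, z ∘ Nat.pairEquiv,
    hz.comp_of_injective Nat.pairEquiv.injective⟩
end

section
/- For every analytic subset Y of a Polish space there exists an analytic subset X of Cantor space 2^ω such that the pair (X, Y) (each with its subspace topology) satisfies UU. -/
open Set TopologicalSpace MeasureTheory

lemma closure_eq_closure_of_forall_mem_closure_iff {Z : Type*} [TopologicalSpace Z]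
    {Y S T : Set Z} (hS : S ⊆ Y) (hT : T ⊆ Y) (h : ∀ y ∈ Y, y ∈ closure S ↔ y ∈ closure T) :
    closure S = closure T :=
  (closure_minimal (fun s hs => (h s (hS hs)).1 (subset_closure hs)) isClosed_closure).antisymm
    (closure_minimal (fun t ht => (h t (hT ht)).2 (subset_closure ht)) isClosed_closure)

namespace MeasureTheory

variable {α β : Type*} [TopologicalSpace α] [TopologicalSpace β]

lemma AnalyticSet.union {s t : Set α} (hs : AnalyticSet s) (ht : AnalyticSet t) :
    AnalyticSet (s ∪ t) := by
  rw [union_eq_iUnion]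
  exact AnalyticSet.iUnion (Bool.forall_bool.2 ⟨ht, hs⟩)

lemma analyticSet_singleton (a : α) : AnalyticSet {a} := by
  simpa using analyticSet_range_of_polishSpace (continuous_const (y := a) (X := Unit))

lemma AnalyticSet.insert {s : Set α} (hs : AnalyticSet s) (a : α) : AnalyticSet (insert a s) :=
  (analyticSet_singleton a).union hs

lemma AnalyticSet.univ_pi {ι : Type*} [Countable ι] [PolishSpace α] {s : ι → Set α}
    (hs : ∀ i, AnalyticSet (s i)) : AnalyticSet (univ.pi s) := by
  rcases isEmpty_or_nonempty ι with hι | hι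
  · rw [univ_eq_empty_iff.2 hι, empty_pi, ← range_id]
    exact analyticSet_range_of_polishSpace continuous_id
  · rw [univ_pi_eq_iInter]
    exact AnalyticSet.iInter fun i => (hs i).preimage (continuous_apply i)

lemma AnalyticSet.image_of_measurable [MeasurableSpace α] [BorelSpace α] [MeasurableSpace β]
    [OpensMeasurableSpace β] [SecondCountableTopology β] {s : Set α} (hs : AnalyticSet s)
    {f : α → β} (hf : Measurable f) : AnalyticSet (f '' s) := by
  obtain ⟨γ, _, _, g, hg, rfl⟩ := analyticSet_iff_exists_polishSpace_range.1 hs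
  borelize γ
  rw [← range_comp, ← image_univ]
  exact MeasurableSet.univ.analyticSet_image (hf.comp hg.measurable)

end MeasureTheory

section BasisCode

variable {Z : Type*} {C : ℕ → Set Z}

open scoped Classical in
noncomputable def basisCode (C : ℕ → Set Z) (S : Set Z) : ℕ → Bool :=
  fun n => decide (C n ∩ S).Nonempty

@[simp]
lemma basisCode_eq_true_iff {S : Set Z} {n : ℕ} :
    basisCode C S n = true ↔ (C n ∩ S).Nonempty := by
  simp [basisCode]

variable [TopologicalSpace Z]

lemma basisCode_closure (hC : ∀ n, IsOpen (C n)) (S : Set Z) :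
    basisCode C (closure S) = basisCode C S := by
  funext n
  rw [Bool.eq_iff_iff, basisCode_eq_true_iff, basisCode_eq_true_iff, inter_comm,
    closure_inter_open_nonempty_iff (hC n), inter_comm]

lemma basisCode_eq_of_closure_eq (hC : ∀ n, IsOpen (C n)) {S T : Set Z}
    (h : closure S = closure T) : basisCode C S = basisCode C T := by
  rw [← basisCode_closure hC, h, basisCode_closure hC]

lemma exists_basisCode_eq_false_and_mem_iff (hC : IsTopologicalBasis (range C)) {S : Set Z}
    {z : Z} : (∃ n, basisCode C S n = false ∧ z ∈ C n) ↔ z ∉ closure S := by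
  simp [hC.mem_closure_iff, ← Bool.not_eq_true, and_comm]

lemma measurable_basisCode_range [MeasurableSpace (ℕ → Z)] [OpensMeasurableSpace (ℕ → Z)]
    (hC : ∀ n, IsOpen (C n)) : Measurable fun u : ℕ → Z => basisCode C (range u) := by
  refine measurable_pi_iff.2 fun n => measurable_to_bool ?_
  have : {u : ℕ → Z | basisCode C (range u) n = true} = ⋃ k, (fun u => u k) ⁻¹' C n := by
    ext u
    simp [inter_nonempty, and_comm]
  exact (this ▸ isOpen_iUnion fun k => (hC n).preimage (continuous_apply k)).measurableSet

lemma isOpen_setOf_exists_eq_false_and_mem {X : Set (ℕ → Bool)} {Y : Set Z}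
    (hC : ∀ n, IsOpen (C n)) :
    IsOpen {p : X × Y | ∃ n, (p.1 : ℕ → Bool) n = false ∧ (p.2 : Z) ∈ C n} := by
  simp only [ofPred_exists]
  refine isOpen_iUnion fun n => IsOpen.inter ?_ ?_
  · exact (isOpen_discrete {false}).preimage (f := fun p : X × Y => (p.1 : ℕ → Bool) n)
      ((continuous_apply n).comp (continuous_subtype_val.comp continuous_fst))
  · exact (hC n).preimage (continuous_subtype_val.comp continuous_snd)

theorem uu_basisCode_image_powerset (hC : IsTopologicalBasis (range C)) (Y : Set Z) :
    UU (basisCode C '' 𝒫 Y) Y := by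
  have hCopen n : IsOpen (C n) := hC.isOpen (mem_range_self n)
  refine ⟨_, isOpen_setOf_exists_eq_false_and_mem hCopen, fun W hW => ?_⟩
  have section_eq (S : Set Z) :
      {y : Y | ∃ n, basisCode C S n = false ∧ (y : Z) ∈ C n} = {y : Y | (y : Z) ∉ closure S} := by
    simp only [exists_basisCode_eq_false_and_mem_iff hC]
  obtain ⟨V, hV, rfl⟩ := isOpen_induced_iff.1 hW
  have section_sdiff : {y : Y | (y : Z) ∉ closure (Y \ V)} = (↑) ⁻¹' V := by
    ext y
    refine ⟨fun hy => by_contra fun hyV => hy (subset_closure ⟨y.2, hyV⟩), fun hyV hy => ?_⟩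
    exact (disjoint_sdiff_right.closure_right hV).notMem_of_mem_left hyV hy
  refine ⟨⟨basisCode C (Y \ V), mem_image_of_mem _ sdiff_subset⟩,
    (section_eq _).trans section_sdiff, ?_⟩
  rintro ⟨_, S, hSY, rfl⟩ hS
  have hsec := ((section_eq S).symm.trans hS).trans section_sdiff.symm
  have hcl : closure S = closure (Y \ V) :=
    closure_eq_closure_of_forall_mem_closure_iff hSY sdiff_subset fun y hy =>
      not_iff_not.1 (Set.ext_iff.1 hsec ⟨y, hy⟩)
  exact Subtype.ext (basisCode_eq_of_closure_eq hCopen hcl)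

lemma basisCode_image_powerset_eq [SecondCountableTopology Z] (hC : ∀ n, IsOpen (C n))
    (Y : Set Z) : basisCode C '' 𝒫 Y =
      insert (basisCode C ∅) ((fun u : ℕ → Z => basisCode C (range u)) '' univ.pi fun _ => Y) := by
  ext x
  constructor
  · rintro ⟨S, hSY, rfl⟩
    rcases S.eq_empty_or_nonempty with rfl | hS
    · exact mem_insert _ _
    have := hS.to_subtype
    obtain ⟨v, hv⟩ := exists_dense_seq S
    have hcl : closure (range (Subtype.val ∘ v)) = closure S := by
      rw [range_comp]
      exact (closure_mono (Subtype.coe_image_subset _ _)).antisymm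
        (closure_minimal (Subtype.dense_iff.1 hv) isClosed_closure)
    exact mem_insert_of_mem _
      ⟨Subtype.val ∘ v, fun k _ => hSY (v k).2, basisCode_eq_of_closure_eq hC hcl⟩
  · rintro (rfl | ⟨u, hu, rfl⟩)
    · exact ⟨∅, empty_subset _, rfl⟩
    · exact ⟨range u, range_subset_iff.2 fun k => hu k trivial, rfl⟩

theorem analyticSet_basisCode_image_powerset [PolishSpace Z] (hC : ∀ n, IsOpen (C n))
    {Y : Set Z} (hY : AnalyticSet Y) : AnalyticSet (basisCode C '' 𝒫 Y) := by
  borelize (ℕ → Z)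
  rw [basisCode_image_powerset_eq hC]
  exact ((AnalyticSet.univ_pi fun _ => hY).image_of_measurable
    (measurable_basisCode_range hC)).insert _

end BasisCode

theorem stmt_14 (Z : Type*) [TopologicalSpace Z] [PolishSpace Z] (Y : Set Z)
    (hY : MeasureTheory.AnalyticSet Y) :
    ∃ X : Set (ℕ → Bool), MeasureTheory.AnalyticSet X ∧ UU X Y := by
  obtain ⟨C, hC⟩ := exists_seq_basis Z
  exact ⟨_, analyticSet_basisCode_image_powerset (fun n => hC.isOpen (mem_range_self n)) hY,
    uu_basisCode_image_powerset hC Y⟩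
end

section
/- Let Z = {x ∈ ℕ → ℕ : x(n) ≠ 0 for at most one n}, a closed subspace of Baire space with the subspace topology. Then Z is a Polish space that is not locally compact, and the pair (2^ω, Z) satisfies UU. -/
/-- The space of functions `ℕ → ℕ` that are nonzero in at most one place. -/
def Zspace : Set (ℕ → ℕ) := {x | {n | x n ≠ 0}.Subsingleton}

/-!
The points of `Zspace` are `0` and the isolated points `single (n, k)`, with value `k + 1` at `n`;
a set containing `0` is open iff it contains every column `{n} × ℕ` from some `n` on. A compact
neighbourhood of `0` would therefore take infinitely many values at one coordinate.

A nonempty open set `V` has exactly one of countably many shapes: `0 ∉ V` and the first point of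
`V` in the Cantor pairing order is the `i`-th (`pointsFrom i`); or `0 ∈ V` and `V` contains every
column but the `0`-th (`colZero`); or `0 ∈ V`, column `i + 1` is the last one not inside `V`, and
`j` is its first missing row (`lastGap i j`). A shape forces the membership of `0` and of every
point outside an infinite set of free positions, where membership is arbitrary, so the sets of a
fixed shape are parametrized by `2^ω`. The sequence `x ∈ 2^ω` codes `∅` if it is `0`, and
otherwise the set of the `m`-th shape given by the bits after its first `1`, at position `m`.
The universal set is open because the forced part of a shape is open and the membership of an
isolated point depends on a single bit.
-/

namespace CantorSpace

def firstOneAt (m : ℕ) : Set (ℕ → Bool) := {x | x m = true ∧ ∀ l < m, x l = false}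

def shiftAfter (m : ℕ) (x : ℕ → Bool) : ℕ → Bool := fun t => x (m + 1 + t)

theorem isOpen_firstOneAt (m : ℕ) : IsOpen (firstOneAt m) := by
  have hcoord : ∀ l b, IsOpen {x : ℕ → Bool | x l = b} := fun l b =>
    (isOpen_discrete {b}).preimage (continuous_apply l : Continuous fun x : ℕ → Bool => x l)
  have : firstOneAt m = {x | x m = true} ∩ ⋂ l ∈ Finset.range m, {x | x l = false} := by
    ext; simp [firstOneAt]
  rw [this]
  exact (hcoord m true).inter (isOpen_biInter_finset fun l _ => hcoord l false)

theorem continuous_shiftAfter (m : ℕ) : Continuous (shiftAfter m) :=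
  continuous_pi fun t => continuous_apply (m + 1 + t)

theorem eq_of_mem_firstOneAt {x : ℕ → Bool} {m m' : ℕ} (hm : x ∈ firstOneAt m)
    (hm' : x ∈ firstOneAt m') : m = m' := by
  by_contra hne
  rcases Nat.lt_or_gt_of_ne hne with h | h
  · exact absurd (hm'.2 m h) (by simp [hm.1])
  · exact absurd (hm.2 m' h) (by simp [hm'.1])

theorem forall_eq_false_or_exists_mem_firstOneAt (x : ℕ → Bool) :
    (∀ l, x l = false) ∨ ∃ m, x ∈ firstOneAt m := by
  by_cases h : ∃ l, x l = true
  · exact Or.inr ⟨Nat.find h, Nat.find_spec h, fun l hl => by simpa using Nat.find_min h hl⟩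
  · exact Or.inl fun l => by simpa using not_exists.mp h l

theorem exists_mem_firstOneAt_shiftAfter_eq (m : ℕ) (u : ℕ → Bool) :
    ∃ x ∈ firstOneAt m, shiftAfter m x = u := by
  refine ⟨fun l => if l < m then false else if l = m then true else u (l - (m + 1)),
    ⟨by simp, fun l hl => by simp [hl]⟩, funext fun t => ?_⟩
  simp [shiftAfter, show ¬ m + 1 + t < m by omega, show m + 1 + t ≠ m by omega]

theorem eq_of_shiftAfter_eq {x x' : ℕ → Bool} {m : ℕ} (hx : x ∈ firstOneAt m)
    (hx' : x' ∈ firstOneAt m) (h : shiftAfter m x = shiftAfter m x') : x = x' := by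
  funext l
  rcases lt_trichotomy l m with hl | rfl | hl
  · rw [hx.2 l hl, hx'.2 l hl]
  · rw [hx.1, hx'.1]
  · simpa [shiftAfter, show m + 1 + (l - m - 1) = l by omega] using congrFun h (l - m - 1)

variable {Y : Type*}

def codeSet (W : ℕ → (ℕ → Bool) → Set Y) : Set ((ℕ → Bool) × Y) :=
  ⋃ m, Prod.fst ⁻¹' firstOneAt m ∩ Prod.map (shiftAfter m) id ⁻¹' {q | q.2 ∈ W m q.1}

theorem isOpen_codeSet [TopologicalSpace Y] {W : ℕ → (ℕ → Bool) → Set Y}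
    (hW : ∀ m, IsOpen {q : (ℕ → Bool) × Y | q.2 ∈ W m q.1}) : IsOpen (codeSet W) :=
  isOpen_iUnion fun m => ((isOpen_firstOneAt m).preimage continuous_fst).inter
    ((hW m).preimage ((continuous_shiftAfter m).prodMap continuous_id))

theorem codeSet_section_of_mem_firstOneAt (W : ℕ → (ℕ → Bool) → Set Y) {x : ℕ → Bool} {m : ℕ}
    (hx : x ∈ firstOneAt m) : {y | (x, y) ∈ codeSet W} = W m (shiftAfter m x) := by
  ext y
  simp only [codeSet, Set.mem_ofPred_eq, Set.mem_iUnion, Set.mem_inter_iff, Set.mem_preimage,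
    Prod.map_fst, Prod.map_snd, id]
  exact ⟨fun ⟨m', hm', hy⟩ => eq_of_mem_firstOneAt hm' hx ▸ hy, fun hy => ⟨m, hx, hy⟩⟩

theorem codeSet_section_of_forall_false (W : ℕ → (ℕ → Bool) → Set Y) {x : ℕ → Bool}
    (hx : ∀ l, x l = false) : {y | (x, y) ∈ codeSet W} = ∅ := by
  ext y
  simp only [codeSet, Set.mem_ofPred_eq, Set.mem_iUnion, Set.mem_inter_iff, Set.mem_preimage,
    Set.mem_empty_iff_false, iff_false, not_exists, not_and]
  exact fun m hm => absurd hm.1 (by simp [hx])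

theorem codeSet_section_injective {W : ℕ → (ℕ → Bool) → Set Y}
    (hinj : ∀ m m' u u', W m u = W m' u' → m = m' ∧ u = u') (hne : ∀ m u, (W m u).Nonempty) :
    Function.Injective fun x => {y | (x, y) ∈ codeSet W} := by
  intro x x' h
  simp only at h
  rcases forall_eq_false_or_exists_mem_firstOneAt x with hx | ⟨m, hm⟩ <;>
    rcases forall_eq_false_or_exists_mem_firstOneAt x' with hx' | ⟨m', hm'⟩
  · exact funext fun l => (hx l).trans (hx' l).symm
  · rw [codeSet_section_of_forall_false W hx, codeSet_section_of_mem_firstOneAt W hm'] at h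
    exact absurd h.symm (hne _ _).ne_empty
  · rw [codeSet_section_of_forall_false W hx', codeSet_section_of_mem_firstOneAt W hm] at h
    exact absurd h (hne _ _).ne_empty
  · rw [codeSet_section_of_mem_firstOneAt W hm, codeSet_section_of_mem_firstOneAt W hm'] at h
    obtain ⟨rfl, hshift⟩ := hinj _ _ _ _ h
    exact eq_of_shiftAfter_eq hm hm' hshift

theorem uu_of_parametrization [TopologicalSpace Y] (S : Type*) [Denumerable S]
    (W : S → (ℕ → Bool) → Set Y)
    (hopen : ∀ s, IsOpen {q : (ℕ → Bool) × Y | q.2 ∈ W s q.1})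
    (hinj : ∀ s s' u u', W s u = W s' u' → s = s' ∧ u = u')
    (hne : ∀ s u, (W s u).Nonempty)
    (hsurj : ∀ V, IsOpen V → V.Nonempty → ∃ s u, W s u = V) : UU (ℕ → Bool) Y := by
  let W' : ℕ → (ℕ → Bool) → Set Y := fun m => W (Denumerable.ofNat S m)
  have hinj' : ∀ m m' u u', W' m u = W' m' u' → m = m' ∧ u = u' := fun m m' u u' h => by
    obtain ⟨hm, hu⟩ := hinj _ _ _ _ h
    exact ⟨(Denumerable.eqv S).symm.injective hm, hu⟩
  refine ⟨codeSet W', isOpen_codeSet fun m => hopen _, fun V hV => ?_⟩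
  obtain ⟨x, hx⟩ : ∃ x, {y | (x, y) ∈ codeSet W'} = V := by
    rcases V.eq_empty_or_nonempty with rfl | hVne
    · exact ⟨fun _ => false, codeSet_section_of_forall_false W' fun _ => rfl⟩
    · obtain ⟨s, u, rfl⟩ := hsurj V hV hVne
      obtain ⟨x, hx, hxu⟩ := exists_mem_firstOneAt_shiftAfter_eq (Encodable.encode s) u
      refine ⟨x, ?_⟩
      rw [codeSet_section_of_mem_firstOneAt W' hx, hxu]
      simp only [W', Denumerable.ofNat_encode]
  exact ⟨x, hx, fun x' hx' =>
    codeSet_section_injective hinj' (fun m u => hne _ u) (hx'.trans hx.symm)⟩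

end CantorSpace

namespace Zspace

theorem isClosed : IsClosed Zspace := by
  have : Zspace = ⋂ a, ⋂ b, {x : ℕ → ℕ | x a ≠ 0 → x b ≠ 0 → a = b} := by
    ext x
    simp only [Zspace, Set.Subsingleton, Set.mem_iInter, Set.mem_ofPred_eq]
    exact ⟨fun h a b ha hb => h ha hb, fun h a ha b hb => h a b ha hb⟩
  rw [this]
  exact isClosed_iInter fun a => isClosed_iInter fun b =>
    (isClosed_discrete {v : ℕ × ℕ | v.1 ≠ 0 → v.2 ≠ 0 → a = b}).preimage
      (by fun_prop : Continuous fun x : ℕ → ℕ => (x a, x b))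

def zero : Zspace := ⟨0, fun a ha => by simp at ha⟩

def single (p : ℕ × ℕ) : Zspace :=
  ⟨Pi.single p.1 (p.2 + 1), Set.subsingleton_singleton.anti Pi.support_single_subset⟩

theorem single_apply (p : ℕ × ℕ) (n : ℕ) :
    (single p).1 n = if n = p.1 then p.2 + 1 else 0 := Pi.single_apply _ _ _

theorem eq_single_of_apply_eq {z : Zspace} {p : ℕ × ℕ} (h : z.1 p.1 = p.2 + 1) :
    z = single p := by
  refine Subtype.ext (funext fun n => ?_)
  rw [single_apply]
  split_ifs with hn
  · rw [hn, h]
  · by_contra hz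
    exact hn (z.2 hz (by simp [h]))

theorem eq_zero_or_eq_single (z : Zspace) : z = zero ∨ ∃ p, z = single p := by
  by_cases h : ∃ n, z.1 n ≠ 0
  · obtain ⟨n, hn⟩ := h
    exact Or.inr ⟨(n, z.1 n - 1), eq_single_of_apply_eq (by simp only; omega)⟩
  · exact Or.inl (Subtype.ext (funext fun n => by simpa [zero] using not_exists.mp h n))

theorem single_injective : Function.Injective single := fun p q h => by
  have h1 := congrArg (fun z : Zspace => z.1 p.1) h
  by_cases hpq : p.1 = q.1
  · simp only [single_apply, hpq, if_true, Nat.add_right_cancel_iff] at h1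
    exact Prod.ext hpq h1
  · simp [single_apply, hpq] at h1

theorem single_ne_zero (p : ℕ × ℕ) : single p ≠ zero := fun h => by
  simpa [single_apply, zero] using congrArg (fun z : Zspace => z.1 p.1) h

theorem set_ext {V V' : Set Zspace} (h0 : zero ∈ V ↔ zero ∈ V')
    (h : ∀ p, single p ∈ V ↔ single p ∈ V') : V = V' := by
  ext z
  rcases eq_zero_or_eq_single z with rfl | ⟨p, rfl⟩
  exacts [h0, h p]

theorem isOpen_setOf_apply_eq (n k : ℕ) : IsOpen {z : Zspace | z.1 n = k} :=
  (isOpen_discrete {k}).preimage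
    ((continuous_apply n).comp continuous_subtype_val : Continuous fun z : Zspace => z.1 n)

theorem isOpen_iff {V : Set Zspace} :
    IsOpen V ↔ (zero ∈ V → ∃ N, ∀ p : ℕ × ℕ, N ≤ p.1 → single p ∈ V) := by
  constructor
  · intro hV h0
    obtain ⟨t, ht, rfl⟩ := isOpen_induced_iff.mp hV
    obtain ⟨I, u, hu, hsub⟩ := isOpen_pi_iff.mp ht 0 h0
    refine ⟨I.sup id + 1, fun p hp => hsub fun a ha => ?_⟩
    have hap : a ≠ p.1 := fun h => by
      have := Finset.le_sup (f := id) ha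
      simp only [id] at this
      omega
    simpa [single_apply, hap] using (hu a ha).2
  · intro hV
    refine isOpen_iff_mem_nhds.mpr fun z hz => ?_
    rcases eq_zero_or_eq_single z with rfl | ⟨p, rfl⟩
    · obtain ⟨N, hN⟩ := hV hz
      have hcyl : IsOpen {z : Zspace | ∀ l ∈ Finset.range N, z.1 l = 0} := by
        simpa only [Set.ofPred_forall] using
          isOpen_biInter_finset fun l _ => isOpen_setOf_apply_eq l 0
      refine Filter.mem_of_superset (hcyl.mem_nhds fun l _ => rfl) fun z hzN => ?_
      rcases eq_zero_or_eq_single z with rfl | ⟨q, rfl⟩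
      · exact hz
      · refine hN q (not_lt.mp fun hq => ?_)
        simpa [single_apply] using hzN q.1 (Finset.mem_range.mpr hq)
    · refine Filter.mem_of_superset ((isOpen_setOf_apply_eq p.1 (p.2 + 1)).mem_nhds
        (by simp [single_apply])) fun z hz => ?_
      rwa [eq_single_of_apply_eq hz]

theorem not_locallyCompactSpace : ¬ LocallyCompactSpace Zspace := by
  intro h
  obtain ⟨K, hK, -, hKc⟩ := h.local_compact_nhds zero Set.univ Filter.univ_mem
  obtain ⟨O, hOK, hO, h0O⟩ := mem_nhds_iff.mp hK
  obtain ⟨N, hN⟩ := isOpen_iff.mp hO h0O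
  have hfin : ((fun z : Zspace => z.1 N) '' K).Finite :=
    (hKc.image ((continuous_apply N).comp continuous_subtype_val)).finite_of_discrete
  refine Set.infinite_range_of_injective (add_left_injective 1) (hfin.subset ?_)
  rintro _ ⟨k, rfl⟩
  exact ⟨single (N, k), hOK (hN (N, k) le_rfl), by simp [single_apply]⟩

inductive Shape
  | pointsFrom (i : ℕ)
  | colZero
  | lastGap (i j : ℕ)

namespace Shape

def equivSumOption : Shape ≃ ℕ ⊕ Option (ℕ × ℕ) where
  toFun
    | pointsFrom i => .inl i
    | colZero => .inr none
    | lastGap i j => .inr (some (i, j))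
  invFun
    | .inl i => pointsFrom i
    | .inr none => colZero
    | .inr (some (i, j)) => lastGap i j
  left_inv s := by cases s <;> rfl
  right_inv a := by rcases a with _ | _ | ⟨_, _⟩ <;> rfl

instance : Denumerable Shape := Denumerable.ofEquiv _ equivSumOption

def zeroIn : Shape → Prop
  | pointsFrom _ => False
  | _ => True

def fixed : Shape → Set (ℕ × ℕ)
  | pointsFrom i => {Nat.unpair i}
  | colZero => {p | 1 ≤ p.1}
  | lastGap i j => {p | i + 1 < p.1 ∨ p.1 = i + 1 ∧ p.2 < j}

def free : Shape → Set (ℕ × ℕ)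
  | pointsFrom i => {p | i < Nat.pair p.1 p.2}
  | colZero => {p | p.1 = 0}
  | lastGap i j => {p | p.1 ≤ i ∨ p.1 = i + 1 ∧ j < p.2}

theorem disjoint_fixed_free (s : Shape) : Disjoint s.fixed s.free := by
  cases s <;> simp [Set.disjoint_left, fixed, free] <;> omega

theorem free_infinite : ∀ s : Shape, s.free.Infinite
  | pointsFrom i => Set.infinite_of_injective_forall_mem (f := fun t => Nat.unpair (i + 1 + t))
      (fun a b h => by simpa using congrArg (fun p => Nat.pair p.1 p.2) h)
      (fun t => by simp [free]; omega)
  | colZero => Set.infinite_of_injective_forall_mem (f := fun k => (0, k))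
      (fun a b h => by simpa using h) (fun k => rfl)
  | lastGap _ _ => Set.infinite_of_injective_forall_mem (f := fun k => (0, k))
      (fun a b h => by simpa using h) (fun k => Or.inl (Nat.zero_le _))

theorem exists_forall_mem_fixed :
    ∀ s : Shape, s.zeroIn → ∃ N, ∀ p : ℕ × ℕ, N ≤ p.1 → p ∈ s.fixed
  | pointsFrom _, h => h.elim
  | colZero, _ => ⟨1, fun _ hp => hp⟩
  | lastGap i _, _ => ⟨i + 2, fun _ hp => Or.inl hp⟩

theorem eq_of_agree {s s' : Shape} (h0 : s.zeroIn ↔ s'.zeroIn)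
    (h : ∀ p, p ∉ s.free → p ∉ s'.free → (p ∈ s.fixed ↔ p ∈ s'.fixed)) : s = s' := by
  cases s <;> cases s' <;> simp only [zeroIn, free, fixed, Set.mem_ofPred_eq,
    Set.mem_singleton_iff, iff_false, iff_true, not_true_eq_false, pointsFrom.injEq,
    lastGap.injEq] at h0 h ⊢
  case pointsFrom.pointsFrom i i' =>
    have hmin := h (Nat.unpair (min i i')) (by simp) (by simp)
    apply Nat.pairEquiv.symm.injective
    simp only [Nat.pairEquiv_symm_apply]
    rcases min_choice i i' with hm | hm <;> simp [hm] at hmin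
    exacts [hmin, hmin.symm]
  case colZero.lastGap i j =>
    simpa using h (i + 1, j)
  case lastGap.colZero i j =>
    simpa using h (i + 1, j)
  case lastGap.lastGap i j i' j' =>
    have := h (i + 1, j)
    have := h (i' + 1, j')
    have := h (i + 1, j')
    have := h (i' + 1, j)
    simp only at *
    omega

noncomputable def enum (s : Shape) : ℕ ≃ s.free :=
  have := s.free_infinite.to_subtype
  Classical.choice nonempty_equiv_of_countable

def fixedSet (s : Shape) : Set Zspace := {z | z = zero ∧ s.zeroIn ∨ ∃ p ∈ s.fixed, z = single p}

noncomputable def toSet (s : Shape) (u : ℕ → Bool) : Set Zspace :=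
  s.fixedSet ∪ (fun t => single (s.enum t)) '' {t | u t = true}

variable {s s' : Shape} {u u' : ℕ → Bool} {p : ℕ × ℕ}

@[simp]
theorem zero_mem_fixedSet : zero ∈ s.fixedSet ↔ s.zeroIn := by
  simp [fixedSet, (single_ne_zero _).symm]

@[simp]
theorem single_mem_fixedSet : single p ∈ s.fixedSet ↔ p ∈ s.fixed := by
  simp [fixedSet, single_ne_zero, single_injective.eq_iff, -Prod.exists]

theorem isOpen_fixedSet (s : Shape) : IsOpen s.fixedSet :=
  isOpen_iff.mpr fun h => by simpa using s.exists_forall_mem_fixed (zero_mem_fixedSet.mp h)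

@[simp]
theorem zero_mem_toSet : zero ∈ s.toSet u ↔ s.zeroIn := by
  simp [toSet, single_ne_zero]

theorem single_mem_toSet :
    single p ∈ s.toSet u ↔ p ∈ s.fixed ∨ ∃ t, u t = true ∧ (s.enum t : ℕ × ℕ) = p := by
  simp [toSet, single_injective.eq_iff]

@[simp]
theorem single_enum_mem_toSet (t : ℕ) : single (s.enum t) ∈ s.toSet u ↔ u t = true := by
  rw [single_mem_toSet, or_iff_right (s.disjoint_fixed_free.notMem_of_mem_right (s.enum t).2)]
  simp [Subtype.val_injective.eq_iff]

theorem toSet_nonempty (s : Shape) (u : ℕ → Bool) : (s.toSet u).Nonempty := by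
  cases s with
  | pointsFrom i => exact ⟨single (Nat.unpair i), single_mem_toSet.mpr (Or.inl rfl)⟩
  | _ => exact ⟨zero, zero_mem_toSet.mpr trivial⟩

theorem isOpen_setOf_mem_toSet (s : Shape) :
    IsOpen {q : (ℕ → Bool) × Zspace | q.2 ∈ s.toSet q.1} := by
  refine isOpen_iff_mem_nhds.mpr fun ⟨u, z⟩ hz => ?_
  rcases hz with hz | ⟨t, ht, rfl⟩
  · exact Filter.mem_of_superset ((isOpen_univ.prod s.isOpen_fixedSet).mem_nhds ⟨trivial, hz⟩)
      fun q hq => Or.inl hq.2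
  · have hbit : IsOpen {v : ℕ → Bool | v t = true} :=
      (isOpen_discrete {true}).preimage (continuous_apply t : Continuous fun v : ℕ → Bool => v t)
    have hpt : IsOpen {single (s.enum t)} :=
      isOpen_iff.mpr fun h => absurd h (single_ne_zero _).symm
    exact Filter.mem_of_superset ((hbit.prod hpt).mem_nhds ⟨ht, rfl⟩)
      fun q ⟨hq1, hq2⟩ => Or.inr ⟨t, hq1, (Set.mem_singleton_iff.mp hq2).symm⟩

def HasShape (V : Set Zspace) (s : Shape) : Prop :=
  (zero ∈ V ↔ s.zeroIn) ∧ ∀ p ∉ s.free, (single p ∈ V ↔ p ∈ s.fixed)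

theorem hasShape_toSet (s : Shape) (u : ℕ → Bool) : HasShape (s.toSet u) s := by
  refine ⟨zero_mem_toSet, fun p hp => single_mem_toSet.trans (or_iff_left ?_)⟩
  rintro ⟨t, -, rfl⟩
  exact hp (s.enum t).2

theorem HasShape.exists_toSet_eq {V : Set Zspace} (h : HasShape V s) : ∃ u, s.toSet u = V := by
  classical
  refine ⟨fun t => decide (single (s.enum t) ∈ V), set_ext (zero_mem_toSet.trans h.1.symm)
    fun p => ?_⟩
  by_cases hp : p ∈ s.free
  · obtain ⟨t, ht⟩ := s.enum.surjective ⟨p, hp⟩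
    have hpt : (s.enum t : ℕ × ℕ) = p := by rw [ht]
    rw [← hpt]
    simp
  · exact ((hasShape_toSet s _).2 p hp).trans (h.2 p hp).symm

theorem HasShape.eq {V : Set Zspace} (h : HasShape V s) (h' : HasShape V s') : s = s' :=
  eq_of_agree (h.1.symm.trans h'.1) fun p hp hp' => (h.2 p hp).symm.trans (h'.2 p hp')

theorem eq_and_eq_of_toSet_eq (h : s.toSet u = s'.toSet u') : s = s' ∧ u = u' := by
  obtain rfl : s = s' := (hasShape_toSet s u).eq (h ▸ hasShape_toSet s' u')
  exact ⟨rfl, funext fun t => Bool.eq_iff_iff.mpr (by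
    rw [← single_enum_mem_toSet (u := u), ← single_enum_mem_toSet (u := u'), h])⟩

theorem exists_hasShape_of_zero_notMem {V : Set Zspace} (h0 : zero ∉ V) (hne : V.Nonempty) :
    ∃ s, HasShape V s := by
  classical
  have hex : ∃ l, single (Nat.unpair l) ∈ V := by
    obtain ⟨z, hz⟩ := hne
    rcases eq_zero_or_eq_single z with rfl | ⟨p, rfl⟩
    · exact absurd hz h0
    · exact ⟨Nat.pair p.1 p.2, by simpa using hz⟩
  refine ⟨pointsFrom (Nat.find hex), by simpa [zeroIn] using h0, fun p hp => ?_⟩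
  simp only [free, fixed, Set.mem_ofPred_eq, not_lt, Set.mem_singleton_iff] at hp ⊢
  rcases hp.lt_or_eq with hlt | heq
  · refine iff_of_false (by simpa using Nat.find_min hex hlt) ?_
    rintro rfl
    simp at hlt
  · refine iff_of_true ?_ (by simp [← heq])
    simpa [← heq] using Nat.find_spec hex

theorem exists_hasShape_of_zero_mem {V : Set Zspace} (hV : IsOpen V) (h0 : zero ∈ V) :
    ∃ s, HasShape V s := by
  classical
  have hex : ∃ N, ∀ p : ℕ × ℕ, N ≤ p.1 → single p ∈ V := isOpen_iff.mp hV h0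
  have hN := Nat.find_spec hex
  rcases Nat.lt_or_ge (Nat.find hex) 2 with hlt | hge
  · refine ⟨colZero, iff_of_true h0 trivial, fun p hp => iff_of_true ?_ ?_⟩
    · exact hN p (by simp only [free, Set.mem_ofPred_eq] at hp; omega)
    · simp only [free, fixed, Set.mem_ofPred_eq] at hp ⊢; omega
  obtain ⟨i, hi⟩ : ∃ i, Nat.find hex = i + 2 := ⟨_, (Nat.sub_add_cancel hge).symm⟩
  have hcol : ∃ k, single (i + 1, k) ∉ V := by
    obtain ⟨p, hp, hpV⟩ := not_forall₂.mp (Nat.find_min hex (show i + 1 < Nat.find hex by omega))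
    have hp1 : p.1 = i + 1 := by
      by_contra hne
      exact hpV (hN p (by omega))
    exact ⟨p.2, by rwa [← hp1]⟩
  refine ⟨lastGap i (Nat.find hcol), iff_of_true h0 trivial, fun ⟨n, k⟩ hp => ?_⟩
  simp only [free, fixed, Set.mem_ofPred_eq, not_or, not_le, not_and, not_lt] at hp ⊢
  rcases Nat.lt_or_ge (i + 1) n with hn | hn
  · exact iff_of_true (hN _ (by simp only; omega)) (Or.inl hn)
  obtain rfl : n = i + 1 := by omega
  rcases (hp.2 rfl).lt_or_eq with hk | rfl
  · exact iff_of_true (by simpa using Nat.find_min hcol hk) (Or.inr ⟨rfl, hk⟩)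
  · exact iff_of_false (Nat.find_spec hcol) (by omega)

theorem exists_hasShape {V : Set Zspace} (hV : IsOpen V) (hne : V.Nonempty) :
    ∃ s, HasShape V s := by
  by_cases h0 : zero ∈ V
  exacts [exists_hasShape_of_zero_mem hV h0, exists_hasShape_of_zero_notMem h0 hne]

end Shape

theorem uu_cantorSpace : UU (ℕ → Bool) Zspace :=
  CantorSpace.uu_of_parametrization Shape Shape.toSet Shape.isOpen_setOf_mem_toSet
    (fun _ _ _ _ => Shape.eq_and_eq_of_toSet_eq) Shape.toSet_nonempty fun _ hV hne =>
    (Shape.exists_hasShape hV hne).imp fun _ h => h.exists_toSet_eq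

end Zspace

theorem stmt_16 :
    PolishSpace Zspace ∧ ¬ LocallyCompactSpace Zspace ∧ UU (ℕ → Bool) Zspace :=
  ⟨Zspace.isClosed.polishSpace, Zspace.not_locallyCompactSpace, Zspace.uu_cantorSpace⟩
end

section
/- Let I be an index type and suppose that for each i ∈ I the pair (X_i, Y_i) of topological spaces satisfies UU. Then the pair (∏_{i∈I} X_i, Σ_{i∈I} Y_i) satisfies UU, where ∏_{i∈I} X_i carries the product topology and Σ_{i∈I} Y_i is the disjoint topological sum of the Y_i. -/
/-!
Given universal sets `U i ⊆ X i × Y i`, take `U = {(x, ⟨i, y⟩) | (x i, y) ∈ U i}`. Its section at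
`x` is the disjoint union of the sections of the `U i` at the coordinates `x i`, and an open set of
the sum is exactly a family of open sets `W i ⊆ Y i`; so the unique coordinates representing the
`W i` assemble into the unique point of the product representing `W`.
-/

section
variable {I : Type*} {X Y : I → Type*}

theorem existsUnique_pi {P : ∀ i, X i → Prop} (h : ∀ i, ∃! a, P i a) :
    ∃! x : ∀ i, X i, ∀ i, P i (x i) := by
  choose x hx hxu using h
  exact ⟨x, hx, fun x' hx' => funext fun i => hxu i _ (hx' i)⟩

def sigmaPiSet (U : ∀ i, Set (X i × Y i)) : Set ((∀ i, X i) × Σ i, Y i) :=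
  {p | (p.1 p.2.1, p.2.2) ∈ U p.2.1}

theorem sigmaPiSet_section_eq_iff (U : ∀ i, Set (X i × Y i)) (x : ∀ i, X i)
    (W : Set (Σ i, Y i)) :
    {q | (x, q) ∈ sigmaPiSet U} = W ↔ ∀ i, {y | (x i, y) ∈ U i} = Sigma.mk i ⁻¹' W := by
  simp only [Set.ext_iff, Sigma.forall, Set.mem_ofPred_eq, Set.mem_preimage, sigmaPiSet]

theorem IsOpen.sigmaPiSet [∀ i, TopologicalSpace (X i)] [∀ i, TopologicalSpace (Y i)]
    {U : ∀ i, Set (X i × Y i)} (hU : ∀ i, IsOpen (U i)) : IsOpen (sigmaPiSet U) := by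
  -- Via `(Σ i, Y i) × X' ≃ₜ Σ i, Y i × X'`, the set becomes a sum of open sets, one per summand.
  have hT : IsOpen {q : Σ i, Y i × ∀ i, X i | (q.2.2 q.1, q.2.1) ∈ U q.1} :=
    isOpen_sigma_iff.2 fun i =>
      (hU i).preimage (((continuous_apply i).comp continuous_snd).prodMk continuous_fst)
  exact hT.preimage (Homeomorph.sigmaProdDistrib.continuous.comp continuous_swap)

end

theorem stmt_18 {I : Type*} (X Y : I → Type*) [∀ i, TopologicalSpace (X i)]
    [∀ i, TopologicalSpace (Y i)] (h : ∀ i, UU (X i) (Y i)) :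
    UU (∀ i, X i) (Σ i, Y i) := by
  choose U hUopen hU using h
  refine ⟨sigmaPiSet U, .sigmaPiSet hUopen, fun W hW => ?_⟩
  simp_rw [sigmaPiSet_section_eq_iff]
  exact existsUnique_pi fun i => hU i _ (hW.preimage continuous_sigmaMk)
end

section
/- Suppose X and Y are topological spaces and U ⊆ X × Y is an open set that is universal for the open subsets of Y, i.e., for every open W ⊆ Y there exists (at least one) x ∈ X with {y : (x,y) ∈ U} = W. If X is second countable, then Y is second countable. -/
/-!
Attach to each basic open set `b` of `X` the interior of `{y | b × {y} ⊆ U}`. Given `y` in an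
open `W = U_x`, a product neighbourhood `b × v ⊆ U` of `(x, y)` puts `y` into the set attached
to `b`, and that set lies inside `U_x = W`; so these countably many sets form a basis of `Y`.
-/

open TopologicalSpace

section

variable {X Y : Type*} [TopologicalSpace X] [TopologicalSpace Y]

theorem isTopologicalBasis_image_interior_of_isOpen_universal {B : Set (Set X)}
    (hB : IsTopologicalBasis B) {U : Set (X × Y)} (hU : IsOpen U)
    (huniv : ∀ W : Set Y, IsOpen W → ∃ x : X, {y | (x, y) ∈ U} = W) :
    IsTopologicalBasis ((fun b => interior {y | ∀ x ∈ b, (x, y) ∈ U}) '' B) := by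
  refine isTopologicalBasis_of_isOpen_of_nhds ?_ ?_
  · rintro _ ⟨b, -, rfl⟩
    exact isOpen_interior
  · intro y W hyW hW
    obtain ⟨x, rfl⟩ := huniv W hW
    obtain ⟨u, v, hu, hv, hxu, hyv, huv⟩ := isOpen_prod_iff.mp hU x y hyW
    obtain ⟨b, hbB, hxb, hbu⟩ := hB.exists_subset_of_mem_open hxu hu
    refine ⟨_, ⟨b, hbB, rfl⟩, ?_, ?_⟩
    · have hv_sub : v ⊆ {y | ∀ x ∈ b, (x, y) ∈ U} := fun y' hy' x' hx' => huv ⟨hbu hx', hy'⟩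
      exact interior_maximal hv_sub hv hyv
    · exact fun y' hy' => interior_subset hy' x hxb

end

theorem stmt_19 (X Y : Type*) [TopologicalSpace X] [TopologicalSpace Y]
    [SecondCountableTopology X] (U : Set (X × Y)) (hU : IsOpen U)
    (huniv : ∀ W : Set Y, IsOpen W → ∃ x : X, {y | (x, y) ∈ U} = W) :
    SecondCountableTopology Y :=
  (isTopologicalBasis_image_interior_of_isOpen_universal (isBasis_countableBasis X) hU
    huniv).secondCountableTopology ((countable_countableBasis X).image _)
end
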